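/- arXiv:2104.04800 — 10 statements merged into one kernel-verified Lean document; each statement's English description precedes it below -/
import Mathlib

section
/- Let n ≥ 1, k ∈ ℝ, m ∈ ℤ, and let u be a smooth nonvanishing real function on an open interval I such that P_n[u] = 0 on I and P_{n-1}[u] is nonvanishing on I. For 1 ≤ i ≤ n define H_i(t) = Σ_{j=1}^{i} (−1)^{j+1} · t^{i−j}/(i−j)! · P_{n−j}[u](t) and ρ_i(t) = u(t) · (P_{n−1}[u](t))^{m−1} · H_i(t). Then for every t ∈ I and every 1 ≤ i ≤ n, ρ_i'(t) = (u'(t)/u(t) − k·m·u(t)^m) · ρ_i(t). (This is the content of the paper's Theorem stating that the n vector fields w_{n,i} = ρ_i ∂_u are generalized symmetries of the nth-order chain equation.) -/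
/-- The chain of differential expressions generated by `g(u) = k·u^m`:
`P_0[u] = u`, `P_{j+1}[u] = (P_j[u])' + k·u^m·P_j[u]`. -/
noncomputable def chainP (k : ℝ) (m : ℤ) (u : ℝ → ℝ) : ℕ → ℝ → ℝ
  | 0 => u
  | j + 1 => fun t => deriv (chainP k m u j) t + k * u t ^ m * chainP k m u j t

private lemma contDiffAt_zpow_comp {f : ℝ → ℝ} {x : ℝ} (hf : ContDiffAt ℝ (⊤ : ℕ∞) f x)
    (hx : f x ≠ 0) (m : ℤ) : ContDiffAt ℝ (⊤ : ℕ∞) (fun t => f t ^ m) x := by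
  cases m with
  | ofNat p => simpa [zpow_natCast] using hf.pow p
  | negSucc p =>
    simp only [zpow_negSucc]
    exact (hf.pow (p + 1)).inv (pow_ne_zero _ hx)

private lemma chainP_contDiffOn (k : ℝ) (m : ℤ) {I : Set ℝ} (hIopen : IsOpen I)
    {u : ℝ → ℝ} (hu : ContDiffOn ℝ (⊤ : ℕ∞) u I) (hu0 : ∀ t ∈ I, u t ≠ 0) :
    ∀ j, ContDiffOn ℝ (⊤ : ℕ∞) (chainP k m u j) I := by
  intro j
  induction j with
  | zero => exact hu
  | succ j ih =>
    have h1 : ContDiffOn ℝ (⊤ : ℕ∞) (deriv (chainP k m u j)) I :=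
      ih.deriv_of_isOpen hIopen (by simp)
    have h2 : ContDiffOn ℝ (⊤ : ℕ∞) (fun t => k * u t ^ m * chainP k m u j t) I := by
      refine ContDiffOn.mul (fun t ht => ?_) ih
      exact (contDiffAt_const.mul
        (contDiffAt_zpow_comp (hu.contDiffAt (hIopen.mem_nhds ht)) (hu0 t ht) m)).contDiffWithinAt
    exact h1.add h2

private lemma chainP_hasDerivAt (k : ℝ) (m : ℤ) {I : Set ℝ} (hIopen : IsOpen I)
    {u : ℝ → ℝ} (hu : ContDiffOn ℝ (⊤ : ℕ∞) u I) (hu0 : ∀ t ∈ I, u t ≠ 0)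
    (j : ℕ) {t : ℝ} (ht : t ∈ I) :
    HasDerivAt (chainP k m u j)
      (chainP k m u (j + 1) t - k * u t ^ m * chainP k m u j t) t := by
  have hd : DifferentiableAt ℝ (chainP k m u j) t :=
    (((chainP_contDiffOn k m hIopen hu hu0 j).contDiffAt
      (hIopen.mem_nhds ht)).differentiableAt (by simp))
  have he : chainP k m u (j + 1) t - k * u t ^ m * chainP k m u j t
      = deriv (chainP k m u j) t := by
    simp only [chainP]; ring
  rw [he]
  exact hd.hasDerivAt

private lemma telescope_sum (Q : ℕ → ℝ) (t : ℝ) (n i : ℕ) (hi1 : 1 ≤ i) (hin : i ≤ n)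
    (hQ : Q n = 0) :
    ∑ j ∈ Finset.Icc 1 i,
      ((-1 : ℝ) ^ (j + 1) * (↑(i - j) * t ^ (i - j - 1)) / (i - j).factorial * Q (n - j)
        + (-1 : ℝ) ^ (j + 1) * t ^ (i - j) / (i - j).factorial * Q (n - j + 1)) = 0 := by
  obtain ⟨p, rfl⟩ : ∃ p, i = p + 1 := ⟨i - 1, by omega⟩
  set G : ℕ → ℝ := fun a => (-1 : ℝ) ^ a * t ^ (p - a) / (p - a).factorial * Q (n - a)
    with hG
  rw [← Finset.Ico_add_one_right_eq_Icc, Finset.sum_Ico_eq_sum_range]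
  have hr : p + 1 + 1 - 1 = p + 1 := by omega
  rw [hr, Finset.sum_range_succ]
  have hlast : (-1 : ℝ) ^ (1 + p + 1) * (↑(p + 1 - (1 + p)) * t ^ (p + 1 - (1 + p) - 1))
        / (p + 1 - (1 + p)).factorial * Q (n - (1 + p))
      + (-1 : ℝ) ^ (1 + p + 1) * t ^ (p + 1 - (1 + p)) / (p + 1 - (1 + p)).factorial
        * Q (n - (1 + p) + 1) = G p := by
    have e1 : p + 1 - (1 + p) = 0 := by omega
    have e2 : n - (1 + p) + 1 = n - p := by omega
    have e3 : p - p = 0 := by omega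
    rw [hG]
    simp only [e1, e2, e3, Nat.factorial_zero, Nat.cast_zero, Nat.cast_one, pow_zero]
    ring
  rw [hlast]
  have hstep : ∀ a ∈ Finset.range p,
      (-1 : ℝ) ^ (1 + a + 1) * (↑(p + 1 - (1 + a)) * t ^ (p + 1 - (1 + a) - 1))
        / (p + 1 - (1 + a)).factorial * Q (n - (1 + a))
      + (-1 : ℝ) ^ (1 + a + 1) * t ^ (p + 1 - (1 + a)) / (p + 1 - (1 + a)).factorial
        * Q (n - (1 + a) + 1) = G a - G (a + 1) := by
    intro a ha
    simp only [Finset.mem_range] at ha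
    obtain ⟨b, hb⟩ : ∃ b, p - a = b + 1 := ⟨p - a - 1, by omega⟩
    have e1 : p + 1 - (1 + a) = b + 1 := by omega
    have e2 : p + 1 - (1 + a) - 1 = b := by omega
    have e4 : n - (1 + a) + 1 = n - a := by omega
    have e3 : n - (a + 1) = n - (1 + a) := by omega
    have e5 : p - (a + 1) = b := by omega
    rw [hG]
    simp only [e4, e3, e1, e2, e5, hb, Nat.factorial_succ]
    have hbf : ((b.factorial : ℝ)) ≠ 0 := Nat.cast_ne_zero.mpr b.factorial_ne_zero
    push_cast
    field_simp
    ring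
  rw [Finset.sum_congr rfl hstep, Finset.sum_range_sub']
  have h0 : G 0 = 0 := by
    rw [hG]; simp [hQ]
  rw [h0]
  ring

theorem generalized_symmetries_of_chain
    (n : ℕ) (hn : 1 ≤ n) (k : ℝ) (m : ℤ)
    (I : Set ℝ) (hIopen : IsOpen I) (hIconn : I.OrdConnected)
    (u : ℝ → ℝ) (hu : ContDiffOn ℝ (⊤ : ℕ∞) u I)
    (hu0 : ∀ t ∈ I, u t ≠ 0)
    (hPn : ∀ t ∈ I, chainP k m u n t = 0)
    (hPn1 : ∀ t ∈ I, chainP k m u (n - 1) t ≠ 0)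
    (H : ℕ → ℝ → ℝ)
    (hH : ∀ i t, H i t =
      ∑ j ∈ Finset.Icc 1 i,
        (-1 : ℝ) ^ (j + 1) * t ^ (i - j) / (i - j).factorial * chainP k m u (n - j) t)
    (ρ : ℕ → ℝ → ℝ)
    (hρ : ∀ i t, ρ i t = u t * chainP k m u (n - 1) t ^ (m - 1) * H i t) :
    ∀ i, 1 ≤ i → i ≤ n → ∀ t ∈ I,
      deriv (ρ i) t = (deriv u t / u t - k * (m : ℝ) * u t ^ m) * ρ i t := by
  intro i hi1 hin t ht
  -- derivative of chainP (n-1)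
  have hP : HasDerivAt (chainP k m u (n - 1))
      (0 - k * u t ^ m * chainP k m u (n - 1) t) t := by
    have := chainP_hasDerivAt k m hIopen hu hu0 (n - 1) ht
    have hn1 : n - 1 + 1 = n := by omega
    rw [hn1, hPn t ht] at this
    exact this
  -- derivative of H i
  have hHd : HasDerivAt (H i) (-(k * u t ^ m) * H i t) t := by
    have hfun : H i = fun s => ∑ j ∈ Finset.Icc 1 i,
        (-1 : ℝ) ^ (j + 1) * s ^ (i - j) / (i - j).factorial * chainP k m u (n - j) s :=
      funext (hH i)
    have hsum : HasDerivAt (H i)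
        (∑ j ∈ Finset.Icc 1 i,
          ((-1 : ℝ) ^ (j + 1) * (↑(i - j) * t ^ (i - j - 1)) / (i - j).factorial
              * chainP k m u (n - j) t
            + (-1 : ℝ) ^ (j + 1) * t ^ (i - j) / (i - j).factorial
              * (chainP k m u (n - j + 1) t - k * u t ^ m * chainP k m u (n - j) t))) t := by
      rw [hfun]
      refine HasDerivAt.fun_sum fun j hj => ?_
      have hc : HasDerivAt (fun s : ℝ => (-1 : ℝ) ^ (j + 1) * s ^ (i - j) / (i - j).factorial)
          ((-1 : ℝ) ^ (j + 1) * (↑(i - j) * t ^ (i - j - 1)) / (i - j).factorial) t :=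
        ((hasDerivAt_pow (i - j) t).const_mul ((-1 : ℝ) ^ (j + 1))).div_const _
      exact hc.mul (chainP_hasDerivAt k m hIopen hu hu0 (n - j) ht)
    have hval : (∑ j ∈ Finset.Icc 1 i,
          ((-1 : ℝ) ^ (j + 1) * (↑(i - j) * t ^ (i - j - 1)) / (i - j).factorial
              * chainP k m u (n - j) t
            + (-1 : ℝ) ^ (j + 1) * t ^ (i - j) / (i - j).factorial
              * (chainP k m u (n - j + 1) t - k * u t ^ m * chainP k m u (n - j) t)))
        = -(k * u t ^ m) * H i t := by
      have expand : ∀ j ∈ Finset.Icc 1 i,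
          ((-1 : ℝ) ^ (j + 1) * (↑(i - j) * t ^ (i - j - 1)) / (i - j).factorial
              * chainP k m u (n - j) t
            + (-1 : ℝ) ^ (j + 1) * t ^ (i - j) / (i - j).factorial
              * (chainP k m u (n - j + 1) t - k * u t ^ m * chainP k m u (n - j) t))
          = ((-1 : ℝ) ^ (j + 1) * (↑(i - j) * t ^ (i - j - 1)) / (i - j).factorial
              * chainP k m u (n - j) t
            + (-1 : ℝ) ^ (j + 1) * t ^ (i - j) / (i - j).factorial
              * chainP k m u (n - j + 1) t)
            + (-(k * u t ^ m))
              * ((-1 : ℝ) ^ (j + 1) * t ^ (i - j) / (i - j).factorial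
                * chainP k m u (n - j) t) := fun j _ => by ring
      rw [Finset.sum_congr rfl expand, Finset.sum_add_distrib,
        telescope_sum (fun a => chainP k m u a t) t n i hi1 hin (hPn t ht),
        ← Finset.mul_sum, ← hH i t, zero_add]
    exact hval ▸ hsum
  -- derivative of chainP (n-1) ^ (m-1)
  have hP0 : chainP k m u (n - 1) t ≠ 0 := hPn1 t ht
  have hz : HasDerivAt (fun s => chainP k m u (n - 1) s ^ (m - 1))
      (((m - 1 : ℤ) : ℝ) * chainP k m u (n - 1) t ^ (m - 1 - 1)
        * (0 - k * u t ^ m * chainP k m u (n - 1) t)) t := by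
    have := (hasDerivAt_zpow (m - 1) (chainP k m u (n - 1) t) (Or.inl hP0)).comp t hP
    simpa [Function.comp_def, mul_assoc] using this
  have hud : HasDerivAt u (deriv u t) t :=
    ((hu.contDiffAt (hIopen.mem_nhds ht)).differentiableAt (by simp)).hasDerivAt
  have hρd : HasDerivAt (ρ i)
      ((deriv u t * chainP k m u (n - 1) t ^ (m - 1)
          + u t * (((m - 1 : ℤ) : ℝ) * chainP k m u (n - 1) t ^ (m - 1 - 1)
            * (0 - k * u t ^ m * chainP k m u (n - 1) t))) * H i t
        + u t * chainP k m u (n - 1) t ^ (m - 1) * (-(k * u t ^ m) * H i t)) t := by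
    have hfun : ρ i = fun s => u s * chainP k m u (n - 1) s ^ (m - 1) * H i s :=
      funext (hρ i)
    rw [hfun]
    exact (hud.mul hz).mul hHd
  rw [hρd.deriv, hρ i t]
  have hzp : chainP k m u (n - 1) t ^ (m - 1)
      = chainP k m u (n - 1) t ^ (m - 1 - 1) * chainP k m u (n - 1) t := by
    rw [← zpow_add_one₀ hP0]
    congr 1
    ring
  rw [hzp]
  have hu0t : u t ≠ 0 := hu0 t ht
  push_cast
  field_simp
  ring
end

section
/- Let n ≥ 1, k ∈ ℝ, m ∈ ℤ, and let u be a smooth nonvanishing real function on an open interval I such that P_n[u] = 0 on I and P_{n-1}[u] is nonvanishing on I. For 1 ≤ i ≤ n define H_i(t) = Σ_{j=1}^{i} (−1)^{j+1} · t^{i−j}/(i−j)! · P_{n−j}[u](t). Then for any 1 ≤ i, j ≤ n and any open subinterval J ⊆ I on which H_j is nonvanishing, the function t ↦ H_i(t)/H_j(t) is constant on J; i.e., every ratio of the characteristics of the generalized symmetries is a first integral of the equation P_n[u] = 0. -/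
theorem ratios_of_characteristics_are_first_integrals
    (n : ℕ) (hn : 1 ≤ n) (k : ℝ) (m : ℤ)
    (I : Set ℝ) (hIopen : IsOpen I) (hIconn : I.OrdConnected)
    (u : ℝ → ℝ) (hu : ContDiffOn ℝ (⊤ : ℕ∞) u I)
    (hu0 : ∀ t ∈ I, u t ≠ 0)
    (hPn : ∀ t ∈ I, chainP k m u n t = 0)
    (hPn1 : ∀ t ∈ I, chainP k m u (n - 1) t ≠ 0)
    (H : ℕ → ℝ → ℝ)
    (hH : ∀ i t, H i t =
      ∑ j ∈ Finset.Icc 1 i,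
        (-1 : ℝ) ^ (j + 1) * t ^ (i - j) / (i - j).factorial * chainP k m u (n - j) t) :
    ∀ i, 1 ≤ i → i ≤ n → ∀ j, 1 ≤ j → j ≤ n →
      ∀ J : Set ℝ, J ⊆ I → IsOpen J → J.OrdConnected →
        (∀ t ∈ J, H j t ≠ 0) →
        ∀ t1 ∈ J, ∀ t2 ∈ J, H i t1 / H j t1 = H i t2 / H j t2 := by
  -- smoothness of `u ^ m`
  have hum : ContDiffOn ℝ (⊤ : ℕ∞) (fun t => u t ^ m) I := by
    rcases m with p | p
    · simpa using hu.pow p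
    · have h1 : ContDiffOn ℝ (⊤ : ℕ∞) (fun t => (u t ^ (p + 1))⁻¹) I :=
        (hu.pow (p + 1)).inv (fun t ht => pow_ne_zero _ (hu0 t ht))
      simpa [zpow_negSucc] using h1
  -- smoothness of the whole chain
  have hchain : ∀ p, ContDiffOn ℝ (⊤ : ℕ∞) (chainP k m u p) I := by
    intro p
    induction p with
    | zero => exact hu
    | succ p ih =>
      have hd : ContDiffOn ℝ (⊤ : ℕ∞) (deriv (chainP k m u p)) I :=
        ih.deriv_of_isOpen hIopen (by simp)
      have : ContDiffOn ℝ (⊤ : ℕ∞)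
          (fun t => deriv (chainP k m u p) t + k * u t ^ m * chainP k m u p t) I :=
        hd.add ((contDiffOn_const.mul hum).mul ih)
      exact this
  -- derivative of each chain element
  have hder : ∀ p, ∀ t ∈ I, HasDerivAt (chainP k m u p)
      (chainP k m u (p + 1) t - k * u t ^ m * chainP k m u p t) t := by
    intro p t ht
    have hdiff : DifferentiableAt ℝ (chainP k m u p) t :=
      (((hchain p).differentiableOn (by simp)).differentiableAt (hIopen.mem_nhds ht))
    have h0 := hdiff.hasDerivAt
    have he : chainP k m u (p + 1) t - k * u t ^ m * chainP k m u p t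
        = deriv (chainP k m u p) t := by
      simp only [chainP]; ring
    rwa [he]
  -- key lemma: each H i (1 ≤ i ≤ n) satisfies H' = -(k u^m) H on I
  have key : ∀ i, 1 ≤ i → i ≤ n → ∀ t ∈ I,
      HasDerivAt (H i) (-(k * u t ^ m) * H i t) t := by
    intro i hi1 hin t ht
    have hfun : H i = fun s => ∑ j ∈ Finset.Icc 1 i,
        (-1 : ℝ) ^ (j + 1) * s ^ (i - j) / (i - j).factorial * chainP k m u (n - j) s :=
      funext (fun s => hH i s)
    rw [hfun]
    set D : ℕ → ℝ := fun j =>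
      (-1 : ℝ) ^ (j + 1) * (↑(i - j) * t ^ (i - j - 1)) / (i - j).factorial
        * chainP k m u (n - j) t
      + (-1 : ℝ) ^ (j + 1) * t ^ (i - j) / (i - j).factorial
        * (chainP k m u (n - j + 1) t - k * u t ^ m * chainP k m u (n - j) t) with hD
    have hterm : ∀ j ∈ Finset.Icc 1 i, HasDerivAt
        (fun s => (-1 : ℝ) ^ (j + 1) * s ^ (i - j) / (i - j).factorial
          * chainP k m u (n - j) s) (D j) t := by
      intro j _
      have h0 := hasDerivAt_pow (i - j) t
      have h1 := (HasDerivAt.const_mul ((-1 : ℝ) ^ (j + 1)) h0).div_const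
        ((i - j).factorial : ℝ)
      exact h1.mul (hder (n - j) t ht)
    have hsum := HasDerivAt.sum hterm
    have hgoal : ∑ j ∈ Finset.Icc 1 i, D j
        = -(k * u t ^ m) * ∑ j ∈ Finset.Icc 1 i,
            (-1 : ℝ) ^ (j + 1) * t ^ (i - j) / (i - j).factorial
              * chainP k m u (n - j) t := by
      set f : ℕ → ℝ := fun j =>
        if j < i then
          (-1 : ℝ) ^ j * t ^ (i - j - 1) / (i - j - 1).factorial * chainP k m u (n - j) t
        else 0 with hf
      have htele : ∀ N : ℕ, ∑ j ∈ Finset.Icc 1 N, (f (j - 1) - f j) = f 0 - f N := by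
        intro N
        induction N with
        | zero => simp
        | succ N ih =>
          rw [Finset.sum_Icc_succ_top (by omega), ih]
          simp only [Nat.add_sub_cancel]
          ring
      have hf0 : f 0 = 0 := by
        simp [hf, hPn t ht, Nat.lt_of_lt_of_le Nat.zero_lt_one hi1]
      have hfi : f i = 0 := by simp [hf]
      have hDj : ∀ j ∈ Finset.Icc 1 i, D j = (f (j - 1) - f j)
          + -(k * u t ^ m) * ((-1 : ℝ) ^ (j + 1) * t ^ (i - j) / (i - j).factorial
              * chainP k m u (n - j) t) := by
        intro j hj
        obtain ⟨hj1, hji⟩ := Finset.mem_Icc.mp hj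
        obtain ⟨p, rfl⟩ : ∃ p, j = p + 1 := ⟨j - 1, by omega⟩
        have hpi : p < i := by omega
        have hpn : p < n := by omega
        obtain ⟨q, hq⟩ : ∃ q, i - (p + 1) = q := ⟨_, rfl⟩
        have e1 : n - (p + 1) + 1 = n - p := by omega
        have e2 : i - p - 1 = q := by omega
        have e3 : (p + 1) - 1 = p := by omega
        have hsgn2 : ((-1 : ℝ)) ^ (p + 1 + 1) = (-1 : ℝ) ^ p := by
          rw [pow_succ, pow_succ]; ring
        have hsgn1 : ((-1 : ℝ)) ^ (p + 1) = -((-1 : ℝ) ^ p) := by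
          rw [pow_succ]; ring
        simp only [hD, hf, e1, e3, e2, hq, if_pos hpi]
        by_cases hlt : p + 1 < i
        · have hq1 : 1 ≤ q := by omega
          have e4 : q - 1 < q := by omega
          have hfact : ((q.factorial : ℝ)) = (q : ℝ) * ((q - 1).factorial : ℝ) := by
            have h5 : q.factorial = q * (q - 1).factorial := by
              conv_lhs => rw [show q = (q - 1) + 1 by omega]
              rw [Nat.factorial_succ]
              congr 2
              omega
            rw [h5]; push_cast; ring
          rw [if_pos hlt, hsgn2, hsgn1, hfact]
          have hfne : ((q - 1).factorial : ℝ) ≠ 0 := by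
            exact_mod_cast Nat.factorial_ne_zero _
          have hqne : (q : ℝ) ≠ 0 := Nat.cast_ne_zero.mpr (by omega)
          field_simp
          ring
        · have hqe : q = 0 := by omega
          rw [if_neg hlt, hsgn2, hqe]
          norm_num
          ring
      calc ∑ j ∈ Finset.Icc 1 i, D j
          = ∑ j ∈ Finset.Icc 1 i, ((f (j - 1) - f j)
            + -(k * u t ^ m) * ((-1 : ℝ) ^ (j + 1) * t ^ (i - j) / (i - j).factorial
                * chainP k m u (n - j) t)) := Finset.sum_congr rfl hDj
        _ = (∑ j ∈ Finset.Icc 1 i, (f (j - 1) - f j))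
            + ∑ j ∈ Finset.Icc 1 i, -(k * u t ^ m)
              * ((-1 : ℝ) ^ (j + 1) * t ^ (i - j) / (i - j).factorial
                * chainP k m u (n - j) t) := Finset.sum_add_distrib
        _ = -(k * u t ^ m) * ∑ j ∈ Finset.Icc 1 i,
              (-1 : ℝ) ^ (j + 1) * t ^ (i - j) / (i - j).factorial
                * chainP k m u (n - j) t := by
            rw [htele i, hf0, hfi, ← Finset.mul_sum]; ring
    rw [← hgoal]
    simpa only [Finset.sum_fn] using hsum
  -- conclusion: ratio is constant on J
  intro i hi1 hin j hj1 hjn J hJI hJopen hJconn hHj t1 ht1 t2 ht2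
  have hconv : Convex ℝ J := hJconn.convex
  have hφ : ∀ t ∈ J, HasDerivAt (fun s => H i s / H j s) 0 t := by
    intro t ht
    have h1 := key i hi1 hin t (hJI ht)
    have h2 := key j hj1 hjn t (hJI ht)
    have h3 := h1.div h2 (hHj t ht)
    have he : (-(k * u t ^ m) * H i t * H j t - H i t * (-(k * u t ^ m) * H j t))
        / H j t ^ 2 = 0 := by
      rw [div_eq_zero_iff]; left; ring
    rwa [he] at h3
  have hdiffJ : DifferentiableOn ℝ (fun s => H i s / H j s) J :=
    fun t ht => ((hφ t ht).differentiableAt).differentiableWithinAt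
  have hfd : ∀ t ∈ J, fderivWithin ℝ (fun s => H i s / H j s) J t = 0 := by
    intro t ht
    have := ((hφ t ht).hasFDerivAt.hasFDerivWithinAt).fderivWithin
      (hJopen.uniqueDiffWithinAt ht)
    rw [this]
    ext x
    simp
  exact hconv.is_const_of_fderivWithin_eq_zero hdiffJ hfd ht1 ht2
end

section
/- Let n ≥ 2, k ∈ ℝ, m ∈ ℤ, and let u be a smooth nonvanishing real function on an open interval I such that P_n[u] = 0 on I and P_{n-1}[u] is nonvanishing on I. For each 2 ≤ i ≤ n, the function I_{(n;i)}(t) = Σ_{r=1}^{i} (−1)^{r+1} · t^{i−r}/(i−r)! · P_{n−r}[u](t)/P_{n−1}[u](t) is constant on I; i.e., each I_{(n;i)} is a first integral of the nth-order chain equation. -/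
theorem first_integrals_of_chain_equation
    (n : ℕ) (hn : 2 ≤ n) (k : ℝ) (m : ℤ)
    (I : Set ℝ) (hIopen : IsOpen I) (hIconn : I.OrdConnected)
    (u : ℝ → ℝ) (hu : ContDiffOn ℝ (⊤ : ℕ∞) u I)
    (hu0 : ∀ t ∈ I, u t ≠ 0)
    (hPn : ∀ t ∈ I, chainP k m u n t = 0)
    (hPn1 : ∀ t ∈ I, chainP k m u (n - 1) t ≠ 0)
    (Ifun : ℕ → ℝ → ℝ)
    (hIfun : ∀ i t, Ifun i t =
      ∑ r ∈ Finset.Icc 1 i,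
        (-1 : ℝ) ^ (r + 1) * t ^ (i - r) / (i - r).factorial *
          (chainP k m u (n - r) t / chainP k m u (n - 1) t)) :
    ∀ i, 2 ≤ i → i ≤ n → ∀ t1 ∈ I, ∀ t2 ∈ I, Ifun i t1 = Ifun i t2 := by
  -- smoothness of u ^ m
  have hum : ContDiffOn ℝ (⊤ : ℕ∞) (fun t => u t ^ m) I := by
    rcases le_or_gt 0 m with hm | hm
    · obtain ⟨p, rfl⟩ := Int.eq_ofNat_of_zero_le hm
      simpa [zpow_natCast] using hu.pow p
    · obtain ⟨p, rfl⟩ : ∃ p : ℕ, m = -(p : ℤ) := ⟨m.natAbs, by omega⟩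
      have h : (fun t => u t ^ (-(p : ℤ))) = fun t => (u t ^ p)⁻¹ := by
        funext t; rw [zpow_neg, zpow_natCast]
      rw [h]
      exact (hu.pow p).inv fun t ht => pow_ne_zero _ (hu0 t ht)
  -- smoothness of the chain
  have smooth : ∀ j, ContDiffOn ℝ (⊤ : ℕ∞) (chainP k m u j) I := by
    intro j; induction j with
    | zero => exact hu
    | succ j ih =>
      exact (ih.deriv_of_isOpen hIopen (by simp)).add ((contDiffOn_const.mul hum).mul ih)
  -- derivative formula
  have hder : ∀ j, ∀ t ∈ I, HasDerivAt (chainP k m u j)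
      (chainP k m u (j + 1) t - k * u t ^ m * chainP k m u j t) t := by
    intro j t ht
    have h1 : DifferentiableAt ℝ (chainP k m u j) t :=
      ((smooth j).contDiffAt (hIopen.mem_nhds ht)).differentiableAt (by simp)
    have h2 : chainP k m u (j + 1) t - k * u t ^ m * chainP k m u j t
        = deriv (chainP k m u j) t := by
      simp [chainP]
    rw [h2]
    exact h1.hasDerivAt
  -- derivative of the quotients
  have hQ : ∀ r, 1 ≤ r → r ≤ n → ∀ t ∈ I, HasDerivAt
      (fun s => chainP k m u (n - r) s / chainP k m u (n - 1) s)
      (chainP k m u (n - r + 1) t / chainP k m u (n - 1) t) t := by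
    intro r hr1 hrn t ht
    have h1 := hder (n - r) t ht
    have h2 := hder (n - 1) t ht
    have e2 : n - 1 + 1 = n := by omega
    rw [e2] at h2
    have hne := hPn1 t ht
    have hd := h1.div h2 hne
    refine hd.congr_deriv ?_
    rw [hPn t ht]
    field_simp
    ring
  intro i hi2 hin t1 ht1 t2 ht2
  obtain ⟨j, rfl⟩ : ∃ j, i = j + 2 := ⟨i - 2, by omega⟩
  set i := j + 2 with hi
  -- zero derivative of Ifun i on I
  have hderiv0 : ∀ t ∈ I, HasDerivAt (Ifun i) 0 t := by
    intro t ht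
    have hfe : Ifun i = fun s => ∑ r ∈ Finset.Icc 1 i,
        (-1 : ℝ) ^ (r + 1) * s ^ (i - r) / (i - r).factorial *
          (chainP k m u (n - r) s / chainP k m u (n - 1) s) :=
      funext fun s => hIfun i s
    rw [hfe]
    have hterm : ∀ r ∈ Finset.Icc 1 i, HasDerivAt
        (fun s => (-1 : ℝ) ^ (r + 1) * s ^ (i - r) / (i - r).factorial *
          (chainP k m u (n - r) s / chainP k m u (n - 1) s))
        ((-1 : ℝ) ^ (r + 1) * (((i - r : ℕ) : ℝ) * t ^ (i - r - 1)) / (i - r).factorial *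
            (chainP k m u (n - r) t / chainP k m u (n - 1) t)
          + (-1 : ℝ) ^ (r + 1) * t ^ (i - r) / (i - r).factorial *
            (chainP k m u (n - r + 1) t / chainP k m u (n - 1) t)) t := by
      intro r hr
      rw [Finset.mem_Icc] at hr
      have hc : HasDerivAt (fun s : ℝ => (-1 : ℝ) ^ (r + 1) * s ^ (i - r) / (i - r).factorial)
          ((-1 : ℝ) ^ (r + 1) * (((i - r : ℕ) : ℝ) * t ^ (i - r - 1)) / (i - r).factorial) t :=
        ((hasDerivAt_pow (i - r) t).const_mul _).div_const _
      exact hc.mul (hQ r hr.1 (hr.2.trans hin) t ht)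
    have hsum := HasDerivAt.fun_sum hterm
    have hzero : (∑ r ∈ Finset.Icc 1 i,
        ((-1 : ℝ) ^ (r + 1) * (((i - r : ℕ) : ℝ) * t ^ (i - r - 1)) / (i - r).factorial *
            (chainP k m u (n - r) t / chainP k m u (n - 1) t)
          + (-1 : ℝ) ^ (r + 1) * t ^ (i - r) / (i - r).factorial *
            (chainP k m u (n - r + 1) t / chainP k m u (n - 1) t))) = 0 := by
      have reindex : ∀ f : ℕ → ℝ,
          ∑ r ∈ Finset.Icc 1 i, f r = ∑ s ∈ Finset.range i, f (s + 1) := by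
        intro f
        rw [← Finset.Ico_add_one_right_eq_Icc, Finset.sum_Ico_eq_sum_range]
        simp [Nat.add_comm]
      have key : ∀ F G : ℕ → ℝ, F (j + 1 + 1) = 0 → G (0 + 1) = 0 →
          (∀ s ∈ Finset.range (j + 1), F (s + 1) + G (s + 1 + 1) = 0) →
          ∑ r ∈ Finset.Icc 1 i, (F r + G r) = 0 := by
        intro F G hF hG hFG
        have h1 : ∑ r ∈ Finset.Icc 1 i, (F r + G r)
            = (∑ s ∈ Finset.range (j + 2), F (s + 1)) + ∑ s ∈ Finset.range (j + 2), G (s + 1) := by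
          rw [Finset.sum_add_distrib, reindex, reindex]
        have h2 : ∑ s ∈ Finset.range (j + 2), F (s + 1)
            = ∑ s ∈ Finset.range (j + 1), F (s + 1) := by
          rw [show (j + 2) = (j + 1) + 1 from rfl, Finset.sum_range_succ, hF, add_zero]
        have h3 : ∑ s ∈ Finset.range (j + 2), G (s + 1)
            = ∑ s ∈ Finset.range (j + 1), G (s + 1 + 1) := by
          rw [show (j + 2) = (j + 1) + 1 from rfl, Finset.sum_range_succ', hG, add_zero]
        rw [h1, h2, h3, ← Finset.sum_add_distrib]
        exact Finset.sum_eq_zero hFG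
      refine key _ _ ?_ ?_ ?_
      · -- F (j + 2) = 0
        have e0 : i - (j + 1 + 1) = 0 := by omega
        rw [e0]
        norm_num
      · -- G 1 = 0
        have e0 : n - (0 + 1) + 1 = n := by omega
        rw [e0, hPn t ht]
        simp
      intro s hs
      rw [Finset.mem_range] at hs
      have e1 : i - (s + 1) = (j - s) + 1 := by omega
      have e2 : i - (s + 1) - 1 = j - s := by omega
      have e3 : i - (s + 1 + 1) = j - s := by omega
      have e4 : n - (s + 1 + 1) + 1 = n - (s + 1) := by omega
      rw [e2, e1, e3, e4]
      have hpow : (-1 : ℝ) ^ (s + 1 + 1 + 1) = -(-1 : ℝ) ^ (s + 1 + 1) := by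
        rw [pow_succ]; ring
      rw [hpow]
      generalize j - s = d
      rw [Nat.factorial_succ]
      have h1 : ((d.factorial : ℕ) : ℝ) ≠ 0 := Nat.cast_ne_zero.mpr (Nat.factorial_ne_zero _)
      have h2 : ((d : ℕ) : ℝ) + 1 ≠ 0 := by positivity
      have hne : chainP k m u (n - 1) t ≠ 0 := hPn1 t ht
      push_cast
      field_simp
      ring
    rw [← hzero]
    exact hsum
  -- constancy
  have hconv : Convex ℝ I := hIconn.convex
  have hdiff : DifferentiableOn ℝ (Ifun i) I := fun t ht =>
    ((hderiv0 t ht).differentiableAt).differentiableWithinAt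
  have hfd : ∀ t ∈ I, fderivWithin ℝ (Ifun i) I t = 0 := by
    intro t ht
    rw [fderivWithin_of_isOpen hIopen ht]
    have h0 : HasFDerivAt (Ifun i) (ContinuousLinearMap.smulRight (1 : ℝ →L[ℝ] ℝ) 0) t :=
      hderiv0 t ht
    rw [h0.fderiv]
    refine ContinuousLinearMap.ext fun x => ?_
    simp
  exact hconv.is_const_of_fderivWithin_eq_zero hdiff hfd ht1 ht2
end

section
/- Let n ≥ 2, k ∈ ℝ, m ∈ ℤ, and let u be a smooth nonvanishing real function on an open interval I such that P_n[u] = 0 on I and P_{n-1}[u] is nonvanishing on I. Let c_r (for 2 ≤ r ≤ n) be the constant value on I of the first integral I_{(n;r)}(t) = Σ_{s=1}^{r} (−1)^{s+1} · t^{r−s}/(r−s)! · P_{n−s}[u](t)/P_{n−1}[u](t), and define the polynomial S(t) = t^{n−1}/(n−1)! + Σ_{r=2}^{n} (−1)^{r+1} · t^{n−r}/(n−r)! · c_r. Then S is nonvanishing on I and u satisfies the first-order Bernoulli (auxiliary) equation u'(t) = −k·u(t)^{m+1} + u(t)·S'(t)/S(t) for all t ∈ I. -/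
lemma altsum (N : ℕ) :
    ∑ j ∈ Finset.range (N + 1), (-1 : ℝ) ^ j / ((N - j).factorial * j.factorial)
      = if N = 0 then 1 else 0 := by
  have h := Int.alternating_sum_range_choose (n := N)
  have h' : (∑ i ∈ Finset.range (N + 1), (-1 : ℝ) ^ i * N.choose i)
      = if N = 0 then 1 else 0 := by
    exact_mod_cast congrArg (fun z : ℤ => (z : ℝ)) h
  have key : ∀ j ∈ Finset.range (N + 1),
      (-1 : ℝ) ^ j / ((N - j).factorial * j.factorial)
        = ((-1 : ℝ) ^ j * N.choose j) / N.factorial := by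
    intro j hj
    have hjN : j ≤ N := Nat.lt_succ_iff.mp (Finset.mem_range.mp hj)
    rw [Nat.cast_choose ℝ hjN]
    have h1 : (j.factorial : ℝ) ≠ 0 := Nat.cast_ne_zero.mpr (Nat.factorial_ne_zero _)
    have h2 : (((N - j).factorial : ℕ) : ℝ) ≠ 0 := Nat.cast_ne_zero.mpr (Nat.factorial_ne_zero _)
    have h3 : (N.factorial : ℝ) ≠ 0 := Nat.cast_ne_zero.mpr (Nat.factorial_ne_zero _)
    field_simp
  rw [Finset.sum_congr rfl key, ← Finset.sum_div, h']
  rcases eq_or_ne N 0 with h | h <;> simp [h]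

lemma Lsum (t w : ℝ) (n s : ℕ) (hsn : s ≤ n) :
    ∑ r ∈ Finset.Icc s n,
      (-1 : ℝ) ^ (r + 1) * t ^ (n - r) / (n - r).factorial *
        ((-1 : ℝ) ^ (s + 1) * t ^ (r - s) / (r - s).factorial * w)
      = if s = n then w else 0 := by
  rw [← Finset.Ico_add_one_right_eq_Icc, Finset.sum_Ico_eq_sum_range,
    show n + 1 - s = (n - s) + 1 by omega]
  have hterm : ∀ j ∈ Finset.range ((n - s) + 1),
      (-1 : ℝ) ^ ((s + j) + 1) * t ^ (n - (s + j)) / (n - (s + j)).factorial *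
        ((-1 : ℝ) ^ (s + 1) * t ^ ((s + j) - s) / ((s + j) - s).factorial * w)
      = ((-1 : ℝ) ^ j / (((n - s) - j).factorial * j.factorial)) * (t ^ (n - s) * w) := by
    intro j hj
    have hj' : j ≤ n - s := Nat.lt_succ_iff.mp (Finset.mem_range.mp hj)
    have h1 : (s + j) - s = j := by omega
    have h2 : n - (s + j) = (n - s) - j := by omega
    rw [h1, h2]
    have h3 : (-1 : ℝ) ^ ((s + j) + 1) * (-1 : ℝ) ^ (s + 1) = (-1 : ℝ) ^ j := by
      rw [← pow_add, show (s + j + 1) + (s + 1) = 2 * (s + 1) + j by ring, pow_add, pow_mul]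
      simp
    have h4 : t ^ ((n - s) - j) * t ^ j = t ^ (n - s) := by
      rw [← pow_add]; congr 1; omega
    have f1 : ((((n - s) - j).factorial : ℕ) : ℝ) ≠ 0 := Nat.cast_ne_zero.mpr (Nat.factorial_ne_zero _)
    have f2 : ((j.factorial : ℕ) : ℝ) ≠ 0 := Nat.cast_ne_zero.mpr (Nat.factorial_ne_zero _)
    field_simp
    linear_combination (t ^ ((n - s) - j) * t ^ j * w) * h3 + ((-1 : ℝ) ^ j * w) * h4
  rw [Finset.sum_congr rfl hterm, ← Finset.sum_mul, altsum]
  rcases eq_or_ne s n with h | h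
  · subst h; simp
  · have hns : n - s ≠ 0 := by omega
    simp [hns, h]

lemma zpow_smooth {u : ℝ → ℝ} {I : Set ℝ} (hu : ContDiffOn ℝ (⊤ : ℕ∞) u I)
    (hu0 : ∀ t ∈ I, u t ≠ 0) (m : ℤ) : ContDiffOn ℝ (⊤ : ℕ∞) (fun t => u t ^ m) I := by
  rcases le_or_gt 0 m with hm | hm
  · lift m to ℕ using hm
    simpa [zpow_natCast] using hu.pow m
  · have h : (fun t => u t ^ m) = fun t => (u t ^ (-m).toNat)⁻¹ := by
      funext t
      rw [← zpow_natCast, Int.toNat_of_nonneg (by omega), ← zpow_neg, neg_neg]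
    rw [h]
    exact (hu.pow _).inv fun x hx => pow_ne_zero _ (hu0 x hx)

lemma chain_smooth {k : ℝ} {m : ℤ} {u : ℝ → ℝ} {I : Set ℝ} (hIopen : IsOpen I)
    (hu : ContDiffOn ℝ (⊤ : ℕ∞) u I) (hu0 : ∀ t ∈ I, u t ≠ 0) :
    ∀ j, ContDiffOn ℝ (⊤ : ℕ∞) (chainP k m u j) I := by
  intro j
  induction j with
  | zero => exact hu
  | succ j ih =>
    have hd : ContDiffOn ℝ (⊤ : ℕ∞) (deriv (chainP k m u j)) I :=
      ih.deriv_of_isOpen hIopen (by simp)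
    exact hd.add ((contDiffOn_const.mul (zpow_smooth hu hu0 m)).mul ih)

theorem auxiliary_bernoulli_equation
    (n : ℕ) (hn : 2 ≤ n) (k : ℝ) (m : ℤ)
    (I : Set ℝ) (hIopen : IsOpen I) (hIconn : I.OrdConnected)
    (u : ℝ → ℝ) (hu : ContDiffOn ℝ (⊤ : ℕ∞) u I)
    (hu0 : ∀ t ∈ I, u t ≠ 0)
    (hPn : ∀ t ∈ I, chainP k m u n t = 0)
    (hPn1 : ∀ t ∈ I, chainP k m u (n - 1) t ≠ 0)
    (c : ℕ → ℝ)
    (hc : ∀ r, 2 ≤ r → r ≤ n → ∀ t ∈ I,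
      (∑ s ∈ Finset.Icc 1 r,
        (-1 : ℝ) ^ (s + 1) * t ^ (r - s) / (r - s).factorial *
          (chainP k m u (n - s) t / chainP k m u (n - 1) t)) = c r)
    (S : ℝ → ℝ)
    (hS : ∀ t, S t = t ^ (n - 1) / (n - 1).factorial +
      ∑ r ∈ Finset.Icc 2 n,
        (-1 : ℝ) ^ (r + 1) * t ^ (n - r) / (n - r).factorial * c r) :
    ∀ t ∈ I, S t ≠ 0 ∧
      deriv u t = -k * u t ^ (m + 1) + u t * (deriv S t / S t) := by
  -- Key algebraic identity: S x = u x / P_{n-1} x on I.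
  have key : ∀ x ∈ I, S x = u x / chainP k m u (n - 1) x := by
    intro t ht
    have hQ : chainP k m u (n - 1) t ≠ 0 := hPn1 t ht
    rw [hS t]
    have hrw : ∀ r ∈ Finset.Icc 2 n,
        (-1 : ℝ) ^ (r + 1) * t ^ (n - r) / (n - r).factorial * c r
        = ∑ s ∈ Finset.Icc 1 n, (if s ≤ r then
            (-1 : ℝ) ^ (r + 1) * t ^ (n - r) / (n - r).factorial *
              ((-1 : ℝ) ^ (s + 1) * t ^ (r - s) / (r - s).factorial *
                (chainP k m u (n - s) t / chainP k m u (n - 1) t)) else 0) := by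
      intro r hr
      obtain ⟨hr2, hrn⟩ := Finset.mem_Icc.mp hr
      rw [← hc r hr2 hrn t ht, Finset.mul_sum]
      rw [show Finset.Icc 1 r = (Finset.Icc 1 n).filter (fun s => s ≤ r) from by
        ext x; simp only [Finset.mem_Icc, Finset.mem_filter]; omega]
      rw [Finset.sum_filter]
    rw [Finset.sum_congr rfl hrw, Finset.sum_comm]
    have hinner : ∀ s ∈ Finset.Icc 1 n,
        (∑ r ∈ Finset.Icc 2 n, (if s ≤ r then
          (-1 : ℝ) ^ (r + 1) * t ^ (n - r) / (n - r).factorial *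
            ((-1 : ℝ) ^ (s + 1) * t ^ (r - s) / (r - s).factorial *
              (chainP k m u (n - s) t / chainP k m u (n - 1) t)) else 0))
        = if s = 1 then -(t ^ (n - 1) / (n - 1).factorial)
          else if s = n then u t / chainP k m u (n - 1) t else 0 := by
      intro s hs
      obtain ⟨hs1, hsn⟩ := Finset.mem_Icc.mp hs
      rcases eq_or_ne s 1 with h1 | h1
      · subst h1
        rw [if_pos rfl]
        have hcond : ∀ r ∈ Finset.Icc 2 n,
            (if (1 : ℕ) ≤ r then
              (-1 : ℝ) ^ (r + 1) * t ^ (n - r) / (n - r).factorial *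
                ((-1 : ℝ) ^ (1 + 1) * t ^ (r - 1) / (r - 1).factorial *
                  (chainP k m u (n - 1) t / chainP k m u (n - 1) t)) else 0)
            = (-1 : ℝ) ^ (r + 1) * t ^ (n - r) / (n - r).factorial *
                ((-1 : ℝ) ^ (1 + 1) * t ^ (r - 1) / (r - 1).factorial *
                  (chainP k m u (n - 1) t / chainP k m u (n - 1) t)) := by
          intro r hr
          obtain ⟨hr2, _⟩ := Finset.mem_Icc.mp hr
          exact if_pos (by omega)
        rw [Finset.sum_congr rfl hcond]
        have hfull := Lsum t (chainP k m u (n - 1) t / chainP k m u (n - 1) t) n 1 (by omega)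
        rw [show Finset.Icc 1 n = insert 1 (Finset.Icc 2 n) from by
            ext x; simp only [Finset.mem_Icc, Finset.mem_insert]; omega,
          Finset.sum_insert (by simp), if_neg (by omega)] at hfull
        have hone : chainP k m u (n - 1) t / chainP k m u (n - 1) t = 1 := div_self hQ
        have hterm1 : (-1 : ℝ) ^ (1 + 1) * t ^ (n - 1) / (n - 1).factorial *
            ((-1 : ℝ) ^ (1 + 1) * t ^ (1 - 1) / ((1 : ℕ) - 1).factorial *
              (chainP k m u (n - 1) t / chainP k m u (n - 1) t))
            = t ^ (n - 1) / (n - 1).factorial := by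
          rw [hone]; norm_num
        rw [hterm1] at hfull
        linarith
      · rw [if_neg h1]
        have hs2 : 2 ≤ s := by omega
        rw [← Finset.sum_filter,
          show (Finset.Icc 2 n).filter (fun r => s ≤ r) = Finset.Icc s n from by
            ext x; simp only [Finset.mem_Icc, Finset.mem_filter]; omega,
          Lsum t _ n s hsn]
        rcases eq_or_ne s n with h | h
        · rw [if_pos h, if_pos h, show n - s = 0 from by omega]
          rfl
        · rw [if_neg h, if_neg h]
    rw [Finset.sum_congr rfl hinner]
    have hsplit : ∀ s ∈ Finset.Icc 1 n,
        (if s = 1 then -(t ^ (n - 1) / (n - 1).factorial)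
          else if s = n then u t / chainP k m u (n - 1) t else 0)
        = (if s = 1 then -(t ^ (n - 1) / (n - 1).factorial) else 0)
          + (if s = n then u t / chainP k m u (n - 1) t else 0) := by
      intro s _
      rcases eq_or_ne s 1 with h | h
      · subst h; rw [if_pos rfl, if_pos rfl, if_neg (by omega)]; ring
      · rw [if_neg h, if_neg h]; ring
    rw [Finset.sum_congr rfl hsplit, Finset.sum_add_distrib,
      Finset.sum_ite_eq' (Finset.Icc 1 n) 1 (fun _ => -(t ^ (n - 1) / ((n - 1).factorial : ℝ))),
      Finset.sum_ite_eq' (Finset.Icc 1 n) n (fun _ => u t / chainP k m u (n - 1) t),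
      if_pos (by simp [Finset.mem_Icc]; omega), if_pos (by simp [Finset.mem_Icc]; omega)]
    ring
  -- Now the analytic part.
  intro t ht
  have hQ : chainP k m u (n - 1) t ≠ 0 := hPn1 t ht
  have hSt : S t = u t / chainP k m u (n - 1) t := key t ht
  have hS0 : S t ≠ 0 := by rw [hSt]; exact div_ne_zero (hu0 t ht) hQ
  refine ⟨hS0, ?_⟩
  -- differentiability of S (it is a polynomial)
  have hSd : DifferentiableAt ℝ S t := by
    have : S = fun x => x ^ (n - 1) / (n - 1).factorial +
        ∑ r ∈ Finset.Icc 2 n,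
          (-1 : ℝ) ^ (r + 1) * x ^ (n - r) / (n - r).factorial * c r := funext hS
    rw [this]
    apply DifferentiableAt.add
    · exact (differentiableAt_pow _).div_const _
    · apply DifferentiableAt.fun_sum
      intro r _
      exact (((differentiableAt_const _).mul (differentiableAt_pow _)).div_const _).mul_const _
  have hPd : DifferentiableAt ℝ (chainP k m u (n - 1)) t :=
    (((chain_smooth hIopen hu hu0 (n - 1)).differentiableOn (by simp)).differentiableAt
      (hIopen.mem_nhds ht))
  have hueq : u =ᶠ[nhds t] fun x => S x * chainP k m u (n - 1) x := by
    filter_upwards [hIopen.mem_nhds ht] with x hx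
    rw [key x hx, div_mul_cancel₀ _ (hPn1 x hx)]
  have hderivP : deriv (chainP k m u (n - 1)) t
      = -(k * u t ^ m * chainP k m u (n - 1) t) := by
    have h0 := hPn t ht
    rw [show n = (n - 1) + 1 by omega] at h0
    have hdef : chainP k m u ((n - 1) + 1) t
        = deriv (chainP k m u (n - 1)) t + k * u t ^ m * chainP k m u (n - 1) t := rfl
    rw [hdef] at h0
    linarith
  have hu_fact : u t = S t * chainP k m u (n - 1) t := by
    rw [hSt, div_mul_cancel₀ _ hQ]
  have hz : u t ^ (m + 1) = u t ^ m * u t := zpow_add_one₀ (hu0 t ht) m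
  rw [hueq.deriv_eq, deriv_fun_mul hSd hPd, hderivP, hz]
  have h1 : u t * (deriv S t / S t) = deriv S t * chainP k m u (n - 1) t := by
    rw [hu_fact]
    field_simp
  have h2 : -k * (u t ^ m * u t) = S t * -(k * u t ^ m * chainP k m u (n - 1) t) := by
    rw [hu_fact]; ring
  linarith
end

section
/- Let n ≥ 2, k ∈ ℝ, and m ∈ ℤ with m ≠ 0. Let u be a smooth nonvanishing real function on an open interval I such that P_n[u] = 0 on I and P_{n−1}[u] is nonvanishing on I. Then there exist real constants C_1, C_2, …, C_n, a monic polynomial T(t) = t^{n−1} + C_2·t^{n−2} + ⋯ + C_n that is nonvanishing on I, and a differentiable function F on I with F'(t) = T(t)^m, such that k·m·F(t) + C_1 ≠ 0 and u(t)^m·(k·m·F(t) + C_1) = T(t)^m for all t ∈ I. (Together with the converse, this says formula u^m = T^m/(k m ∫T^m + C_1) gives the general solution of the nth-order chain equation.) -/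
open Set intervalIntegral

lemma aux_exp_zpow (x : ℝ) (m : ℤ) : Real.exp ((m : ℝ) * x) = Real.exp x ^ m := by
  obtain ⟨l, rfl | rfl⟩ := m.eq_nat_or_neg
  · push_cast; rw [Real.exp_nat_mul, zpow_natCast]
  · push_cast
    rw [neg_mul, Real.exp_neg, Real.exp_nat_mul, zpow_neg, zpow_natCast]

lemma aux_contDiffOn_zpow {f : ℝ → ℝ} {s : Set ℝ} (hf : ContDiffOn ℝ (⊤ : ℕ∞) f s)
    (hf0 : ∀ x ∈ s, f x ≠ 0) (m : ℤ) : ContDiffOn ℝ (⊤ : ℕ∞) (fun x => f x ^ m) s := by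
  obtain ⟨l, rfl | rfl⟩ := m.eq_nat_or_neg
  · simpa [zpow_natCast] using hf.pow l
  · have : ∀ x, f x ^ (-(l:ℤ)) = (f x ^ l)⁻¹ := by
      intro x; rw [zpow_neg, zpow_natCast]
    simp only [this]
    exact (hf.pow l).inv (fun x hx => pow_ne_zero _ (hf0 x hx))

lemma aux_continuousOn_zpow {f : ℝ → ℝ} {s : Set ℝ} (hf : ContinuousOn f s)
    (hf0 : ∀ x ∈ s, f x ≠ 0) (m : ℤ) : ContinuousOn (fun x => f x ^ m) s := by
  obtain ⟨l, rfl | rfl⟩ := m.eq_nat_or_neg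
  · simp only [zpow_natCast]; exact hf.pow l
  · have : ∀ x, f x ^ (-(l:ℤ)) = (f x ^ l)⁻¹ := by
      intro x; rw [zpow_neg, zpow_natCast]
    simp only [this]
    exact (hf.pow l).inv₀ (fun x hx => pow_ne_zero _ (hf0 x hx))

lemma aux_const {s : Set ℝ} (hso : IsOpen s) (hsc : Convex ℝ s) {f : ℝ → ℝ}
    (hf : ∀ x ∈ s, HasDerivAt f 0 x) {x y : ℝ} (hx : x ∈ s) (hy : y ∈ s) : f x = f y := by
  apply hsc.is_const_of_fderivWithin_eq_zero (𝕜 := ℝ)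
    (fun z hz => ((hf z hz).differentiableAt).differentiableWithinAt) _ hx hy
  intro z hz
  rw [fderivWithin_of_mem_nhds (hso.mem_nhds hz)]
  have : HasFDerivAt f (0 : ℝ →L[ℝ] ℝ) z := by
    have h := (hf z hz).hasFDerivAt
    have e : ContinuousLinearMap.toSpanSingleton ℝ (0:ℝ) = 0 := by
      ext; simp
    rwa [e] at h
  exact this.fderiv

lemma aux_ftc {s : Set ℝ} (hso : IsOpen s) (hsc : Convex ℝ s) {f : ℝ → ℝ}
    (hf : ContinuousOn f s) {t₀ : ℝ} (ht₀ : t₀ ∈ s) :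
    ∀ t ∈ s, HasDerivAt (fun x => ∫ τ in t₀..x, f τ) (f t) t := by
  intro t ht
  apply intervalIntegral.integral_hasDerivAt_right
  · exact (hf.mono (hsc.ordConnected.uIcc_subset ht₀ ht)).intervalIntegrable
  · exact hf.stronglyMeasurableAtFilter hso t ht
  · exact hf.continuousAt (hso.mem_nhds ht)

theorem general_solution_of_chain_equation
    (n : ℕ) (hn : 2 ≤ n) (k : ℝ) (m : ℤ) (hm : m ≠ 0)
    (I : Set ℝ) (hIopen : IsOpen I) (hIconn : I.OrdConnected)
    (u : ℝ → ℝ) (hu : ContDiffOn ℝ (⊤ : ℕ∞) u I) (hu0 : ∀ t ∈ I, u t ≠ 0)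
    (hPn : ∀ t ∈ I, chainP k m u n t = 0)
    (hPn1 : ∀ t ∈ I, chainP k m u (n - 1) t ≠ 0) :
    ∃ (C : ℕ → ℝ) (T F : ℝ → ℝ),
      (∀ t, T t = t ^ (n - 1) + ∑ r ∈ Finset.Icc 2 n, C r * t ^ (n - r)) ∧
      (∀ t ∈ I, T t ≠ 0) ∧
      (∀ t ∈ I, HasDerivAt F (T t ^ m) t) ∧
      (∀ t ∈ I, k * (m : ℝ) * F t + C 1 ≠ 0) ∧
      (∀ t ∈ I, u t ^ m * (k * (m : ℝ) * F t + C 1) = T t ^ m) := by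
  rcases I.eq_empty_or_nonempty with hI | ⟨t₀, ht₀⟩
  · subst hI
    exact ⟨fun _ => 0, fun t => t ^ (n - 1) + ∑ r ∈ Finset.Icc 2 n, 0 * t ^ (n - r),
      fun _ => 0, fun t => rfl, fun t ht => absurd ht (notMem_empty t),
      fun t ht => absurd ht (notMem_empty t), fun t ht => absurd ht (notMem_empty t),
      fun t ht => absurd ht (notMem_empty t)⟩
  have hconv : Convex ℝ I := convex_iff_ordConnected.mpr hIconn
  replace hu : ContDiffOn ℝ (⊤ : ℕ∞) u I := hu.of_le (by simp)
  set N := n - 1 with hNdef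
  have hN : N + 1 = n := by omega
  -- the function g = k u^m and its antiderivative φ
  set g : ℝ → ℝ := fun t => k * u t ^ m with hgdef
  have hg : ContDiffOn ℝ (⊤ : ℕ∞) g I := (contDiffOn_const).mul (aux_contDiffOn_zpow hu hu0 m)
  set φ : ℝ → ℝ := fun x => ∫ τ in t₀..x, g τ with hφdef
  have hφ : ∀ t ∈ I, HasDerivAt φ (g t) t := aux_ftc hIopen hconv hg.continuousOn ht₀
  have hφ0 : φ t₀ = 0 := intervalIntegral.integral_same
  have hφs : ContDiffOn ℝ (⊤ : ℕ∞) φ I := by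
    rw [contDiffOn_infty_iff_deriv_of_isOpen hIopen]
    refine ⟨fun t ht => ((hφ t ht).differentiableAt).differentiableWithinAt, ?_⟩
    exact hg.congr fun t ht => (hφ t ht).deriv
  set v : ℝ → ℝ := fun t => Real.exp (φ t) * u t with hvdef
  have hv : ContDiffOn ℝ (⊤ : ℕ∞) v I := ((Real.contDiff_exp.of_le le_top).comp_contDiffOn hφs).mul hu
  -- iterated derivatives of v
  have hD : ∀ j, ContDiffOn ℝ (⊤ : ℕ∞) (deriv^[j] v) I := by
    intro j; induction j with
    | zero => exact hv
    | succ j ih =>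
      rw [Function.iterate_succ_apply']
      exact ((contDiffOn_infty_iff_deriv_of_isOpen hIopen).mp ih).2
  have hD' : ∀ j, ∀ t ∈ I, HasDerivAt (deriv^[j] v) (deriv^[j+1] v t) t := by
    intro j t ht
    have h1 : DifferentiableAt ℝ (deriv^[j] v) t :=
      (((hD j).differentiableOn (by simp)) t ht).differentiableAt (hIopen.mem_nhds ht)
    rw [Function.iterate_succ_apply']
    exact h1.hasDerivAt
  -- the chain identity
  have hchain : ∀ j, ∀ t ∈ I, chainP k m u j t = Real.exp (-φ t) * deriv^[j] v t := by
    intro j; induction j with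
    | zero =>
      intro t ht
      show u t = Real.exp (-φ t) * (Real.exp (φ t) * u t)
      rw [← mul_assoc, ← Real.exp_add, neg_add_cancel, Real.exp_zero, one_mul]
    | succ j ih =>
      intro t ht
      have heq : chainP k m u j =ᶠ[nhds t] fun s => Real.exp (-φ s) * deriv^[j] v s :=
        Filter.eventually_of_mem (hIopen.mem_nhds ht) ih
      show deriv (chainP k m u j) t + k * u t ^ m * chainP k m u j t = _
      rw [heq.deriv_eq, ih t ht]
      have h1 : HasDerivAt (fun s => Real.exp (-φ s)) (Real.exp (-φ t) * (-g t)) t := by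
        have := ((hφ t ht).neg).exp
        simpa using this
      have h2 := hD' j t ht
      rw [(h1.fun_mul h2).deriv]
      have : k * u t ^ m = g t := rfl
      rw [this]; ring
  -- P_n = 0 gives D^n v = 0 on I
  have hDn : ∀ t ∈ I, deriv^[n] v t = 0 := by
    intro t ht
    have h := hPn t ht
    rw [hchain n t ht] at h
    exact (mul_eq_zero.mp h).resolve_left (Real.exp_ne_zero _)
  -- D^N v is a nonzero constant on I
  set c : ℝ := deriv^[N] v t₀ with hcdef
  have hc0 : c ≠ 0 := by
    intro h
    apply hPn1 t₀ ht₀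
    rw [hchain N t₀ ht₀, ← hcdef, h, mul_zero]
  have hconst : ∀ t ∈ I, deriv^[N] v t = c := by
    intro t ht
    refine aux_const hIopen hconv (f := deriv^[N] v) ?_ ht ht₀
    intro x hx
    have h := hD' N x hx
    rw [hN] at h
    rwa [hDn x hx] at h
  -- downward induction: iterated derivatives of v are polynomials
  have key : ∀ j, j ≤ N → ∃ a : ℕ → ℝ, a j ≠ 0 ∧
      ∀ t ∈ I, deriv^[N - j] v t = ∑ i ∈ Finset.range (j+1), a i * t ^ i := by
    intro j
    induction j with
    | zero =>
      intro _
      exact ⟨fun _ => c, hc0, fun t ht => by simp [hconst t ht]⟩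
    | succ j ih =>
      intro hj
      obtain ⟨a, haj, ha⟩ := ih (by omega)
      set G : ℝ → ℝ := fun t => ∑ i ∈ Finset.range (j+1), a i / (i+1) * t ^ (i+1) with hGdef
      have hG : ∀ t, HasDerivAt G (∑ i ∈ Finset.range (j+1), a i * t ^ i) t := by
        intro t
        refine HasDerivAt.fun_sum fun i _ => ?_
        have h := (hasDerivAt_pow (i+1) t).const_mul (a i / (i+1))
        refine h.congr_deriv ?_
        have : ((i:ℝ) + 1) ≠ 0 := by positivity
        push_cast
        field_simp
      set h : ℝ → ℝ := fun t => deriv^[N - (j+1)] v t - G t with hhdef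
      have hh0 : ∀ t ∈ I, HasDerivAt h 0 t := by
        intro t ht
        have h1 := hD' (N - (j+1)) t ht
        have e : N - (j+1) + 1 = N - j := by omega
        rw [e] at h1
        have h2 : deriv^[N - j] v t = ∑ i ∈ Finset.range (j+1), a i * t ^ i := ha t ht
        rw [h2] at h1
        simpa using h1.fun_sub (hG t)
      refine ⟨fun i => if i = 0 then h t₀ else a (i-1) / i, ?_, ?_⟩
      · simp only [Nat.succ_ne_zero, if_false]
        have : ((j:ℝ) + 1) ≠ 0 := by positivity
        push_cast
        exact div_ne_zero haj this
      · intro t ht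
        have hcst : h t = h t₀ := aux_const hIopen hconv hh0 ht ht₀
        have : deriv^[N - (j+1)] v t = h t₀ + G t := by
          rw [← hcst]; simp [hhdef]
        rw [this, Finset.sum_range_succ']
        simp only [Nat.succ_sub_one, pow_zero, mul_one, if_pos rfl]
        rw [add_comm]
        congr 1
        refine Finset.sum_congr rfl fun i _ => ?_
        rw [if_neg (Nat.succ_ne_zero i)]
        push_cast
        simp
  obtain ⟨a, haN, ha⟩ := key N le_rfl
  have hNN : N - N = 0 := Nat.sub_self N
  have hvp : ∀ t ∈ I, v t = ∑ i ∈ Finset.range n, a i * t ^ i := by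
    intro t ht
    have := ha t ht
    rwa [hNN, Function.iterate_zero_apply, hN] at this
  set A : ℝ := a N with hAdef
  set C : ℕ → ℝ := fun r => if r = 1 then A ^ (-m) else a (n - r) / A with hCdef
  set T : ℝ → ℝ := fun t => t ^ (n-1) + ∑ r ∈ Finset.Icc 2 n, C r * t ^ (n - r) with hTdef
  -- A * T = the polynomial
  have hAT : ∀ t, A * T t = ∑ i ∈ Finset.range n, a i * t ^ i := by
    intro t
    have hre : ∑ r ∈ Finset.Icc 2 n, a (n - r) * t ^ (n - r)
        = ∑ i ∈ Finset.range (n-1), a i * t ^ i := by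
      refine Finset.sum_bij' (fun r _ => n - r) (fun i _ => n - i) ?_ ?_ ?_ ?_ ?_
      · intro r hr; simp only [Finset.mem_Icc] at hr; simp only [Finset.mem_range]; omega
      · intro i hi; simp only [Finset.mem_range] at hi; simp only [Finset.mem_Icc]; omega
      · intro r hr; simp only [Finset.mem_Icc] at hr; omega
      · intro i hi; simp only [Finset.mem_range] at hi; omega
      · intro r hr; rfl
    have hsum : ∑ r ∈ Finset.Icc 2 n, A * (C r * t ^ (n - r))
        = ∑ r ∈ Finset.Icc 2 n, a (n - r) * t ^ (n - r) := by
      refine Finset.sum_congr rfl fun r hr => ?_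
      simp only [Finset.mem_Icc] at hr
      have : C r = a (n - r) / A := by
        rw [hCdef]; simp only; rw [if_neg (by omega)]
      rw [this]
      field_simp
    calc A * T t = A * t ^ (n-1) + ∑ r ∈ Finset.Icc 2 n, A * (C r * t ^ (n - r)) := by
          rw [hTdef]; simp only; rw [mul_add, Finset.mul_sum]
      _ = a N * t ^ N + ∑ i ∈ Finset.range (n-1), a i * t ^ i := by rw [hsum, hre, hAdef]
      _ = ∑ i ∈ Finset.range n, a i * t ^ i := by
          rw [← hN, Finset.sum_range_succ, add_comm, Nat.add_sub_cancel]
  have hvT : ∀ t ∈ I, v t = A * T t := fun t ht => by rw [hAT t]; exact hvp t ht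
  have hv0 : ∀ t ∈ I, v t ≠ 0 := fun t ht =>
    mul_ne_zero (Real.exp_ne_zero _) (hu0 t ht)
  have hT0 : ∀ t ∈ I, T t ≠ 0 := by
    intro t ht hT
    apply hv0 t ht
    rw [hvT t ht, hT, mul_zero]
  have hTcont : ContinuousOn T I := by
    have : Continuous T := by
      rw [hTdef]
      exact (continuous_pow _).add
        (continuous_finset_sum _ fun r _ => continuous_const.mul (continuous_pow _))
    exact this.continuousOn
  set F : ℝ → ℝ := fun x => ∫ τ in t₀..x, T τ ^ m with hFdef
  have hF : ∀ t ∈ I, HasDerivAt F (T t ^ m) t :=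
    aux_ftc hIopen hconv (aux_continuousOn_zpow hTcont hT0 m) ht₀
  have hF0 : F t₀ = 0 := intervalIntegral.integral_same
  set E : ℝ → ℝ := fun t => Real.exp ((m:ℝ) * φ t) with hEdef
  have hAm : A ^ m ≠ 0 := zpow_ne_zero m haN
  have hE' : ∀ t ∈ I, HasDerivAt E (k * (m:ℝ) * (u t ^ m) * E t) t := by
    intro t ht
    have h1 := ((hφ t ht).const_mul (m:ℝ)).exp
    convert h1 using 1
    show k * (m:ℝ) * (u t ^ m) * E t = Real.exp ((m:ℝ) * φ t) * ((m:ℝ) * g t)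
    rw [hgdef]; simp only; rw [hEdef]; ring
  -- u^m * E = A^m * T^m on I
  have hUE : ∀ t ∈ I, u t ^ m * E t = A ^ m * T t ^ m := by
    intro t ht
    have hut : u t = Real.exp (-φ t) * (A * T t) := by
      have : v t = A * T t := hvT t ht
      rw [hvdef] at this
      simp only at this
      rw [← this, ← mul_assoc, ← Real.exp_add, neg_add_cancel, Real.exp_zero, one_mul]
    rw [hut, hEdef]
    simp only
    rw [aux_exp_zpow, mul_zpow, mul_zpow]
    have : Real.exp (-φ t) ^ m * Real.exp (φ t) ^ m = 1 := by
      rw [← mul_zpow, ← Real.exp_add, neg_add_cancel, Real.exp_zero, one_zpow]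
    calc Real.exp (-φ t) ^ m * (A ^ m * T t ^ m) * Real.exp (φ t) ^ m
        = (Real.exp (-φ t) ^ m * Real.exp (φ t) ^ m) * (A ^ m * T t ^ m) := by ring
      _ = A ^ m * T t ^ m := by rw [this, one_mul]
  -- the constancy argument: k m F + C 1 = E / A^m on I
  have hC1 : C 1 = A ^ (-m) := by simp [hCdef]
  have hmain : ∀ t ∈ I, k * (m:ℝ) * F t + C 1 = E t / A ^ m := by
    intro t ht
    set W : ℝ → ℝ := fun s => k * (m:ℝ) * F s + C 1 - E s / A ^ m with hWdef
    have hW0 : W t₀ = 0 := by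
      have : W t₀ = k * (m:ℝ) * F t₀ + C 1 - E t₀ / A ^ m := rfl
      rw [this, hF0, hC1]
      have : E t₀ = 1 := by
        show Real.exp ((m:ℝ) * φ t₀) = 1
        rw [hφ0, mul_zero, Real.exp_zero]
      rw [this, zpow_neg]
      field_simp
      ring
    have hW' : ∀ s ∈ I, HasDerivAt W 0 s := by
      intro s hs
      have h1 := ((hF s hs).const_mul (k * (m:ℝ))).add_const (C 1)
      have h2 := (hE' s hs).div_const (A ^ m)
      have h3 := h1.sub h2
      refine h3.congr_deriv ?_
      have := hUE s hs
      have husm : u s ^ m * E s = A ^ m * T s ^ m := this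
      rw [mul_assoc (k * (m:ℝ)) (u s ^ m), husm]
      field_simp
      ring
    have : W t = W t₀ := aux_const hIopen hconv hW' ht ht₀
    rw [hW0] at this
    have := sub_eq_zero.mp (by rw [hWdef] at this; exact this)
    exact this
  have hE0 : ∀ t, E t ≠ 0 := fun t => Real.exp_ne_zero _
  refine ⟨C, T, F, fun t => rfl, hT0, hF, ?_, ?_⟩
  · intro t ht
    rw [hmain t ht]
    exact div_ne_zero (hE0 t) hAm
  · intro t ht
    rw [hmain t ht, ← mul_div_assoc, hUE t ht, mul_div_cancel_left₀ _ hAm]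
end

section
/- Let k, C_1, C_2 ∈ ℝ and let I be an open interval on which k·(t^2 + 2C_2·t) + 2C_1 ≠ 0. Then the function u(t) = 2(t + C_2)/(k·(t^2 + 2C_2·t) + 2C_1) satisfies the second-order Riccati chain equation u''(t) + k^2·u(t)^3 + 3k·u(t)·u'(t) = 0 for all t ∈ I. -/
/-!
If `u = p / φ` with `φ' = k p`, then `(q / φ)' + k u (q / φ) = q' / φ` for every `q`: the
two cross terms `∓ k p q / φ²` cancel. Starting from `R₀[u] = p / φ` this gives
`R_j[u] = p⁽ʲ⁾ / φ`. For `φ = k (t² + 2 C₂ t) + 2 C₁` and `p = 2 (t + C₂)` we have `φ' = k p` and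
`p'' = 0`, so `R₂[u] = 0` wherever `φ ≠ 0`.
-/

open Filter Topology

/-- The Riccati chain is `R_{j+1}[u] = riccatiStep k u R_j[u]`. -/
noncomputable def riccatiStep (k : ℝ) (u v : ℝ → ℝ) : ℝ → ℝ :=
  fun t => deriv v t + k * u t * v t

theorem riccatiStep_riccatiStep_self {k t : ℝ} {u : ℝ → ℝ} (hu : DifferentiableAt ℝ u t)
    (hR : DifferentiableAt ℝ (riccatiStep k u u) t) :
    riccatiStep k u (riccatiStep k u u) t =
      deriv (deriv u) t + k ^ 2 * u t ^ 3 + 3 * k * u t * deriv u t := by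
  have hderiv : deriv u = fun s => riccatiStep k u u s - k * (u s * u s) := by
    funext s
    simp only [riccatiStep]
    ring
  have hR' : HasDerivAt (fun s => riccatiStep k u u s - k * (u s * u s))
      (deriv (riccatiStep k u u) t - k * (deriv u t * u t + u t * deriv u t)) t :=
    hR.hasDerivAt.sub ((hu.hasDerivAt.mul hu.hasDerivAt).const_mul k)
  rw [← hderiv] at hR'
  rw [hR'.deriv]
  simp only [riccatiStep]
  ring

theorem riccatiStep_eventuallyEq_div {k t : ℝ} {u v p q q' φ : ℝ → ℝ}
    (hφ : ∀ᶠ s in 𝓝 t, HasDerivAt φ (k * p s) s) (hq : ∀ᶠ s in 𝓝 t, HasDerivAt q (q' s) s)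
    (hφ0 : ∀ᶠ s in 𝓝 t, φ s ≠ 0) (hu : u =ᶠ[𝓝 t] fun s => p s / φ s)
    (hv : v =ᶠ[𝓝 t] fun s => q s / φ s) :
    riccatiStep k u v =ᶠ[𝓝 t] fun s => q' s / φ s := by
  filter_upwards [hφ, hq, hφ0, hu, hv, hv.eventuallyEq_nhds] with s hφs hqs hφ0s hus hvs hvnhds
  have hderiv : deriv v s = (q' s * φ s - q s * (k * p s)) / φ s ^ 2 :=
    hvnhds.deriv_eq.trans (hqs.div hφs hφ0s).deriv
  simp only [riccatiStep, hderiv, hus, hvs]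
  field_simp
  ring

theorem second_riccati_explicit_solution_general
    (k C₁ C₂ : ℝ)
    (I : Set ℝ)
    (hden : ∀ t ∈ I, k * (t ^ 2 + 2 * C₂ * t) + 2 * C₁ ≠ 0)
    (u : ℝ → ℝ)
    (hu : ∀ t, u t = 2 * (t + C₂) / (k * (t ^ 2 + 2 * C₂ * t) + 2 * C₁)) :
    ∀ t ∈ I, deriv (deriv u) t + k ^ 2 * u t ^ 3 + 3 * k * u t * deriv u t = 0 := by
  intro t ht
  set φ : ℝ → ℝ := fun s => k * (s ^ 2 + 2 * C₂ * s) + 2 * C₁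
  set p : ℝ → ℝ := fun s => 2 * (s + C₂)
  have hp : ∀ s, HasDerivAt p 2 s := fun s => by
    simpa using ((hasDerivAt_id s).add_const C₂).const_mul 2
  have hφ : ∀ s, HasDerivAt φ (k * p s) s := fun s =>
    ((((hasDerivAt_id' s).fun_pow 2).fun_add ((hasDerivAt_id' s).const_mul (2 * C₂))).const_mul
      k).add_const (2 * C₁) |>.congr_deriv (by ring)
  have hφ0 : ∀ᶠ s in 𝓝 t, φ s ≠ 0 :=
    (hφ t).continuousAt.eventually_ne (hden t ht)
  have hu_eq : u =ᶠ[𝓝 t] fun s => p s / φ s := .of_forall hu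
  have hR₁ : riccatiStep k u u =ᶠ[𝓝 t] fun s => 2 / φ s :=
    riccatiStep_eventuallyEq_div (.of_forall hφ) (.of_forall hp) hφ0 hu_eq hu_eq
  have hR₂ : riccatiStep k u (riccatiStep k u u) =ᶠ[𝓝 t] fun s => 0 / φ s :=
    riccatiStep_eventuallyEq_div (.of_forall hφ) (.of_forall fun s => hasDerivAt_const s 2)
      hφ0 hu_eq hR₁
  have hu_diff : DifferentiableAt ℝ u t :=
    hu_eq.differentiableAt_iff.mpr ((hp t).div (hφ t) (hden t ht)).differentiableAt
  have hR₁_diff : DifferentiableAt ℝ (riccatiStep k u u) t :=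
    hR₁.differentiableAt_iff.mpr ((differentiableAt_const 2).div (hφ t).differentiableAt
      (hden t ht))
  rw [← riccatiStep_riccatiStep_self hu_diff hR₁_diff, hR₂.eq_of_nhds, zero_div]

theorem second_riccati_explicit_solution
    (k C₁ C₂ : ℝ)
    (I : Set ℝ) (hIopen : IsOpen I) (hIconn : I.OrdConnected)
    (hden : ∀ t ∈ I, k * (t ^ 2 + 2 * C₂ * t) + 2 * C₁ ≠ 0)
    (u : ℝ → ℝ)
    (hu : ∀ t, u t = 2 * (t + C₂) / (k * (t ^ 2 + 2 * C₂ * t) + 2 * C₁)) :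
    ∀ t ∈ I, deriv (deriv u) t + k ^ 2 * u t ^ 3 + 3 * k * u t * deriv u t = 0 :=
  second_riccati_explicit_solution_general k C₁ C₂ I hden u hu
end

section
/- Let k, C_1, C_2 ∈ ℝ and let I be an open interval on which 2k·(t + C_2)^3 + 3C_1 > 0 and t + C_2 ≠ 0. If u is a twice differentiable nonvanishing function on I satisfying u(t)^2 = 3(t + C_2)^2/(2k·(t + C_2)^3 + 3C_1) for all t ∈ I, then u satisfies the second-order Abel chain equation u''(t) + k^2·u(t)^5 + 4k·u'(t)·u(t)^2 = 0 for all t ∈ I. -/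
/-!
Write `s = t + C₂` and `D = 2 k s³ + 3 C₁`. Differentiating `u² D = 3 s²` and eliminating `D`
gives the first equation of the chain, `u' + k u³ = u / s`. Since
`A₂[u] = (A₁[u])' + k u² A₁[u]`, substituting `A₁[u] = u g` with `g = 1 / s` gives
`A₂[u] = u (g' + g²)`, and `1 / s` solves the Riccati equation `g' + g² = 0`.
-/

open Filter Topology

section AbelChain

variable {k C₁ C₂ : ℝ} {u : ℝ → ℝ} {t : ℝ}

theorem abel_first_order_of_sq_mul_eq (hu : DifferentiableAt ℝ u t)
    (hsq : ∀ᶠ y in 𝓝 t, u y ^ 2 * (2 * k * (y + C₂) ^ 3 + 3 * C₁) = 3 * (y + C₂) ^ 2)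
    (hu0 : u t ≠ 0) (hs : t + C₂ ≠ 0) :
    deriv u t + k * u t ^ 3 = u t / (t + C₂) := by
  have hshift : HasDerivAt (fun y => y + C₂) 1 t := (hasDerivAt_id t).add_const C₂
  have hlhs : HasDerivAt (fun y => u y ^ 2 * (2 * k * (y + C₂) ^ 3 + 3 * C₁))
      (2 * u t ^ 1 * deriv u t * (2 * k * (t + C₂) ^ 3 + 3 * C₁) +
        u t ^ 2 * (2 * k * (3 * (t + C₂) ^ 2 * 1))) t :=
    (hu.hasDerivAt.pow 2).mul (((hshift.pow 3).const_mul (2 * k)).add_const (3 * C₁))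
  have hrhs : HasDerivAt (fun y => 3 * (y + C₂) ^ 2) (3 * (2 * (t + C₂) ^ 1 * 1)) t :=
    (hshift.pow 2).const_mul 3
  have hderiv := hlhs.unique (hrhs.congr_of_eventuallyEq hsq)
  have hD : 2 * k * (t + C₂) ^ 3 + 3 * C₁ ≠ 0 := by
    intro hD
    have := hsq.self_of_nhds
    rw [hD, mul_zero] at this
    exact hs (by simpa using this.symm)
  rw [eq_div_iff hs]
  apply mul_left_cancel₀ (mul_ne_zero hu0 hD)
  linear_combination (t + C₂) / 2 * hderiv + (k * (t + C₂) * u t ^ 2 - 1) * hsq.self_of_nhds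

theorem abel_second_order_of_first_order (hu : DifferentiableAt ℝ u t)
    (hfirst : ∀ᶠ y in 𝓝 t, deriv u y + k * u y ^ 3 = u y / (y + C₂)) (hs : t + C₂ ≠ 0) :
    deriv (deriv u) t + k ^ 2 * u t ^ 5 + 4 * k * deriv u t * u t ^ 2 = 0 := by
  have hderiv_eq : deriv u =ᶠ[𝓝 t] fun y => u y / (y + C₂) - k * u y ^ 3 :=
    hfirst.mono fun y hy => by linear_combination hy
  have hrhs : HasDerivAt (fun y => u y / (y + C₂) - k * u y ^ 3)
      ((deriv u t * (t + C₂) - u t * 1) / (t + C₂) ^ 2 -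
        k * (3 * u t ^ 2 * deriv u t)) t :=
    (hu.hasDerivAt.div ((hasDerivAt_id t).add_const C₂) hs).sub
      ((hu.hasDerivAt.pow 3).const_mul k)
  rw [hderiv_eq.deriv_eq, hrhs.deriv, hderiv_eq.self_of_nhds]
  field_simp
  ring

end AbelChain

theorem second_abel_explicit_solution_general
    (k C₁ C₂ : ℝ)
    (I : Set ℝ) (hIopen : IsOpen I)
    (u : ℝ → ℝ)
    (hu1 : DifferentiableOn ℝ u I)
    (hu0 : ∀ t ∈ I, u t ≠ 0)
    (hsol : ∀ t ∈ I, u t ^ 2 = 3 * (t + C₂) ^ 2 / (2 * k * (t + C₂) ^ 3 + 3 * C₁)) :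
    ∀ t ∈ I, deriv (deriv u) t + k ^ 2 * u t ^ 5 + 4 * k * deriv u t * u t ^ 2 = 0 := by
  have hcleared : ∀ t ∈ I,
      u t ^ 2 * (2 * k * (t + C₂) ^ 3 + 3 * C₁) = 3 * (t + C₂) ^ 2 ∧ t + C₂ ≠ 0 := by
    intro t ht
    have hsq : u t ^ 2 ≠ 0 := pow_ne_zero 2 (hu0 t ht)
    rw [hsol t ht, div_ne_zero_iff] at hsq
    exact ⟨by rw [hsol t ht, div_mul_cancel₀ _ hsq.2], by simpa using hsq.1⟩
  have hdiff : ∀ t ∈ I, DifferentiableAt ℝ u t := fun t ht =>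
    hu1.differentiableAt (hIopen.mem_nhds ht)
  have hfirst : ∀ t ∈ I, deriv u t + k * u t ^ 3 = u t / (t + C₂) := fun t ht =>
    abel_first_order_of_sq_mul_eq (hdiff t ht)
      (eventually_of_mem (hIopen.mem_nhds ht) fun y hy => (hcleared y hy).1)
      (hu0 t ht) (hcleared t ht).2
  intro t ht
  exact abel_second_order_of_first_order (hdiff t ht)
    (eventually_of_mem (hIopen.mem_nhds ht) hfirst) (hcleared t ht).2

theorem second_abel_explicit_solution
    (k C₁ C₂ : ℝ)
    (I : Set ℝ) (hIopen : IsOpen I) (hIconn : I.OrdConnected)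
    (hpos : ∀ t ∈ I, 2 * k * (t + C₂) ^ 3 + 3 * C₁ > 0)
    (hne : ∀ t ∈ I, t + C₂ ≠ 0)
    (u : ℝ → ℝ)
    (hu1 : DifferentiableOn ℝ u I) (hu2 : DifferentiableOn ℝ (deriv u) I)
    (hu0 : ∀ t ∈ I, u t ≠ 0)
    (hsol : ∀ t ∈ I, u t ^ 2 = 3 * (t + C₂) ^ 2 / (2 * k * (t + C₂) ^ 3 + 3 * C₁)) :
    ∀ t ∈ I, deriv (deriv u) t + k ^ 2 * u t ^ 5 + 4 * k * deriv u t * u t ^ 2 = 0 :=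
  second_abel_explicit_solution_general k C₁ C₂ I hIopen u hu1 hu0 hsol
end

section
/- Let u be a three times differentiable positive real function on an open interval I, and define the chain terms with k = 4 and m = 1/2 (real power): P_0 = u, P_1 = u' + 4·u^{3/2}, P_2 = (P_1)' + 4·u^{1/2}·P_1, P_3 = (P_2)' + 4·u^{1/2}·P_2. Then P_2(t) = u''(t) + 10·u(t)^{1/2}·u'(t) + 16·u(t)^2, and √(u(t))·P_3(t) = √(u(t))·u'''(t) + 14·u''(t)·u(t) + 5·u'(t)^2 + 72·u'(t)·u(t)·√(u(t)) + 64·u(t)^3 for all t ∈ I. In particular, a positive function u solves √u·u''' + 14·u''·u + 5·u'^2 + 72·u'·u·√u + 64·u^3 = 0 on I if and only if P_3 = 0 on I. -/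
/-!
On the set where `u > 0` we have `u ^ (1/2) = √u` and `u ^ (3/2) = u * √u`, so the chain only
involves `u`, its derivatives and `s = √u`, with `s' = u' / (2 s)` and `s² = u`. Differentiating
`P₁ = u' + 4 u s` gives `P₁' = u'' + 6 s u'`, hence `P₂ = u'' + 10 s u' + 16 u²`; differentiating
once more, `P₃` has a single term `5 u'² / s`, which multiplication by `s` clears.
-/

open Real Set Filter

lemma rpow_three_halves_eq_mul_sqrt {x : ℝ} (hx : 0 ≤ x) : x ^ ((3 : ℝ) / 2) = x * √x := by
  rw [sqrt_eq_rpow, show (3 : ℝ) / 2 = 1 + 1 / 2 by norm_num, rpow_add' hx (by norm_num),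
    rpow_one]

section ChainDerivatives

variable {u v w : ℝ → ℝ} {u₁ v₁ w₁ t : ℝ}

lemma hasDerivAt_add_four_mul_mul_sqrt (hu : HasDerivAt u u₁ t) (hv : HasDerivAt v v₁ t)
    (hpos : 0 < u t) :
    HasDerivAt (fun s => v s + 4 * (u s * √(u s))) (v₁ + 6 * √(u t) * u₁) t := by
  have hs : √(u t) ≠ 0 := (sqrt_pos.mpr hpos).ne'
  refine (hv.add ((hu.mul (hu.sqrt hpos.ne')).const_mul 4)).congr_deriv ?_
  field_simp
  linear_combination -4 * u₁ * mul_self_sqrt hpos.le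

lemma hasDerivAt_add_ten_mul_sqrt_add_sixteen_mul_sq (hu : HasDerivAt u u₁ t)
    (hv : HasDerivAt v v₁ t) (hw : HasDerivAt w w₁ t) (hu₀ : u t ≠ 0) :
    HasDerivAt (fun s => w s + 10 * √(u s) * v s + 16 * u s ^ 2)
      (w₁ + 10 * (u₁ / (2 * √(u t)) * v t + √(u t) * v₁) + 32 * u t * u₁) t := by
  refine ((hw.add (((hu.sqrt hu₀).const_mul 10).mul hv)).add
    ((hu.pow 2).const_mul 16)).congr_deriv ?_
  push_cast
  ring

end ChainDerivatives

theorem chain_with_half_integer_exponent_general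
    (I : Set ℝ) (hIopen : IsOpen I)
    (u : ℝ → ℝ) (hupos : ∀ t ∈ I, 0 < u t)
    (hd1 : DifferentiableOn ℝ u I)
    (hd2 : DifferentiableOn ℝ (deriv u) I)
    (hd3 : DifferentiableOn ℝ (deriv (deriv u)) I)
    (P₁ P₂ P₃ : ℝ → ℝ)
    (hP₁ : ∀ t, P₁ t = deriv u t + 4 * u t ^ ((3 : ℝ) / 2))
    (hP₂ : ∀ t, P₂ t = deriv P₁ t + 4 * u t ^ ((1 : ℝ) / 2) * P₁ t)
    (hP₃ : ∀ t, P₃ t = deriv P₂ t + 4 * u t ^ ((1 : ℝ) / 2) * P₂ t) :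
    (∀ t ∈ I, P₂ t =
      deriv (deriv u) t + 10 * u t ^ ((1 : ℝ) / 2) * deriv u t + 16 * u t ^ 2) ∧
    (∀ t ∈ I, Real.sqrt (u t) * P₃ t =
      Real.sqrt (u t) * deriv (deriv (deriv u)) t + 14 * deriv (deriv u) t * u t +
        5 * deriv u t ^ 2 + 72 * deriv u t * u t * Real.sqrt (u t) + 64 * u t ^ 3) ∧
    ((∀ t ∈ I, Real.sqrt (u t) * deriv (deriv (deriv u)) t + 14 * deriv (deriv u) t * u t +
        5 * deriv u t ^ 2 + 72 * deriv u t * u t * Real.sqrt (u t) + 64 * u t ^ 3 = 0) ↔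
      (∀ t ∈ I, P₃ t = 0)) := by
  simp only [← sqrt_eq_rpow] at hP₂ hP₃ ⊢
  have hasDerivAt_of {f : ℝ → ℝ} (hf : DifferentiableOn ℝ f I) {t : ℝ} (ht : t ∈ I) :
      HasDerivAt f (deriv f t) t :=
    ((hf t ht).differentiableAt (hIopen.mem_nhds ht)).hasDerivAt
  have hP₁' : ∀ t ∈ I, HasDerivAt P₁ (deriv (deriv u) t + 6 * √(u t) * deriv u t) t :=
    fun t ht => (hasDerivAt_add_four_mul_mul_sqrt (hasDerivAt_of hd1 ht) (hasDerivAt_of hd2 ht)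
      (hupos t ht)).congr_of_eventuallyEq <| EqOn.eventuallyEq_of_mem
        (fun s hs => by rw [hP₁, rpow_three_halves_eq_mul_sqrt (hupos s hs).le])
        (hIopen.mem_nhds ht)
  have hP₂_eq : ∀ t ∈ I, P₂ t = deriv (deriv u) t + 10 * √(u t) * deriv u t + 16 * u t ^ 2 := by
    intro t ht
    rw [hP₂, (hP₁' t ht).deriv, hP₁, rpow_three_halves_eq_mul_sqrt (hupos t ht).le]
    linear_combination 16 * u t * mul_self_sqrt (hupos t ht).le
  have hP₃_eq : ∀ t ∈ I, √(u t) * P₃ t =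
      √(u t) * deriv (deriv (deriv u)) t + 14 * deriv (deriv u) t * u t +
        5 * deriv u t ^ 2 + 72 * deriv u t * u t * √(u t) + 64 * u t ^ 3 := by
    intro t ht
    have hpos := hupos t ht
    have hs : √(u t) ≠ 0 := (sqrt_pos.mpr hpos).ne'
    have hP₂' := (hasDerivAt_add_ten_mul_sqrt_add_sixteen_mul_sq (hasDerivAt_of hd1 ht)
      (hasDerivAt_of hd2 ht) (hasDerivAt_of hd3 ht) hpos.ne').congr_of_eventuallyEq
        (EqOn.eventuallyEq_of_mem hP₂_eq (hIopen.mem_nhds ht))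
    rw [hP₃, hP₂'.deriv, hP₂_eq t ht]
    linear_combination 5 * deriv u t ^ 2 * mul_inv_cancel₀ hs +
      (14 * deriv (deriv u) t + 40 * deriv u t * √(u t) + 64 * u t ^ 2) * mul_self_sqrt hpos.le
  refine ⟨hP₂_eq, hP₃_eq, forall₂_congr fun t ht => ?_⟩
  rw [← hP₃_eq t ht, mul_eq_zero, or_iff_right (sqrt_pos.mpr (hupos t ht)).ne']

theorem chain_with_half_integer_exponent
    (I : Set ℝ) (hIopen : IsOpen I) (hIconn : I.OrdConnected)
    (u : ℝ → ℝ) (hupos : ∀ t ∈ I, 0 < u t)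
    (hd1 : DifferentiableOn ℝ u I)
    (hd2 : DifferentiableOn ℝ (deriv u) I)
    (hd3 : DifferentiableOn ℝ (deriv (deriv u)) I)
    (P₁ P₂ P₃ : ℝ → ℝ)
    (hP₁ : ∀ t, P₁ t = deriv u t + 4 * u t ^ ((3 : ℝ) / 2))
    (hP₂ : ∀ t, P₂ t = deriv P₁ t + 4 * u t ^ ((1 : ℝ) / 2) * P₁ t)
    (hP₃ : ∀ t, P₃ t = deriv P₂ t + 4 * u t ^ ((1 : ℝ) / 2) * P₂ t) :
    (∀ t ∈ I, P₂ t =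
      deriv (deriv u) t + 10 * u t ^ ((1 : ℝ) / 2) * deriv u t + 16 * u t ^ 2) ∧
    (∀ t ∈ I, Real.sqrt (u t) * P₃ t =
      Real.sqrt (u t) * deriv (deriv (deriv u)) t + 14 * deriv (deriv u) t * u t +
        5 * deriv u t ^ 2 + 72 * deriv u t * u t * Real.sqrt (u t) + 64 * u t ^ 3) ∧
    ((∀ t ∈ I, Real.sqrt (u t) * deriv (deriv (deriv u)) t + 14 * deriv (deriv u) t * u t +
        5 * deriv u t ^ 2 + 72 * deriv u t * u t * Real.sqrt (u t) + 64 * u t ^ 3 = 0) ↔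
      (∀ t ∈ I, P₃ t = 0)) :=
  chain_with_half_integer_exponent_general I hIopen u hupos hd1 hd2 hd3 P₁ P₂ P₃ hP₁ hP₂ hP₃
end

section
/- Let u be a smooth positive real function on an open interval I satisfying the third-order equation √(u)·u''' + 14·u''·u + 5·u'^2 + 72·u'·u·√u + 64·u^3 = 0 on I, and define P_1 = u' + 4·u^{3/2} and P_2 = u'' + 10·√u·u' + 16·u^2. Assume P_2 is nonvanishing on I. Then the two functions I_2(t) = t − P_1(t)/P_2(t) and I_3(t) = t^2/2 − t·P_1(t)/P_2(t) + u(t)/P_2(t) are constant on I; i.e., they are functionally independent first integrals of the equation obtained without any integration. -/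
lemma const_of_deriv0 {I : Set ℝ} (hIopen : IsOpen I) (hIconn : I.OrdConnected)
    {f : ℝ → ℝ} (hf : ∀ t ∈ I, HasDerivAt f 0 t) : ∃ c : ℝ, ∀ t ∈ I, f t = c := by
  rcases I.eq_empty_or_nonempty with h | ⟨t₀, ht₀⟩
  · exact ⟨0, by simp [h]⟩
  · refine ⟨f t₀, fun t ht => ?_⟩
    have hconv : Convex ℝ I := convex_iff_ordConnected.mpr hIconn
    refine hconv.is_const_of_fderivWithin_eq_zero
      (fun x hx => ((hf x hx).differentiableAt).differentiableWithinAt)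
      (fun x hx => ?_) ht ht₀
    rw [fderivWithin_of_isOpen hIopen hx]
    have h0 := (hf x hx).hasFDerivAt
    have : (ContinuousLinearMap.toSpanSingleton ℝ (0 : ℝ)) = 0 := by
      ext z
      simp
    rw [this] at h0
    exact h0.fderiv

theorem first_integrals_of_third_order_example
    (I : Set ℝ) (hIopen : IsOpen I) (hIconn : I.OrdConnected)
    (u : ℝ → ℝ) (hu : ContDiffOn ℝ (⊤ : ℕ∞) u I) (hupos : ∀ t ∈ I, 0 < u t)
    (hode : ∀ t ∈ I, Real.sqrt (u t) * deriv (deriv (deriv u)) t +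
      14 * deriv (deriv u) t * u t + 5 * deriv u t ^ 2 +
      72 * deriv u t * u t * Real.sqrt (u t) + 64 * u t ^ 3 = 0)
    (P₁ P₂ : ℝ → ℝ)
    (hP₁ : ∀ t, P₁ t = deriv u t + 4 * u t ^ ((3 : ℝ) / 2))
    (hP₂ : ∀ t, P₂ t = deriv (deriv u) t + 10 * Real.sqrt (u t) * deriv u t + 16 * u t ^ 2)
    (hP₂0 : ∀ t ∈ I, P₂ t ≠ 0)
    (I₂ I₃ : ℝ → ℝ)
    (hI₂ : ∀ t, I₂ t = t - P₁ t / P₂ t)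
    (hI₃ : ∀ t, I₃ t = t ^ 2 / 2 - t * (P₁ t / P₂ t) + u t / P₂ t) :
    (∃ c₂ : ℝ, ∀ t ∈ I, I₂ t = c₂) ∧ (∃ c₃ : ℝ, ∀ t ∈ I, I₃ t = c₃) := by
  have hu1 : ContDiffOn ℝ (⊤ : ℕ∞) (deriv u) I := hu.deriv_of_isOpen hIopen (by simp)
  have hu2 : ContDiffOn ℝ (⊤ : ℕ∞) (deriv (deriv u)) I := hu1.deriv_of_isOpen hIopen (by simp)
  have key : ∀ t ∈ I, HasDerivAt I₂ 0 t ∧ HasDerivAt I₃ 0 t := by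
    intro t ht
    have hut : 0 < u t := hupos t ht
    have hune : u t ≠ 0 := ne_of_gt hut
    set s := Real.sqrt (u t) with hs
    have hspos : 0 < s := Real.sqrt_pos.mpr hut
    have hsne : s ≠ 0 := ne_of_gt hspos
    have hs2 : s ^ 2 = u t := Real.sq_sqrt hut.le
    have hd1 : HasDerivAt u (deriv u t) t :=
      ((hu.differentiableOn (by simp)).differentiableAt (hIopen.mem_nhds ht)).hasDerivAt
    have hd2 : HasDerivAt (deriv u) (deriv (deriv u) t) t :=
      ((hu1.differentiableOn (by simp)).differentiableAt (hIopen.mem_nhds ht)).hasDerivAt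
    have hd3 : HasDerivAt (deriv (deriv u)) (deriv (deriv (deriv u)) t) t :=
      ((hu2.differentiableOn (by simp)).differentiableAt (hIopen.mem_nhds ht)).hasDerivAt
    have hsqrt : HasDerivAt (fun x => Real.sqrt (u x)) (deriv u t / (2 * s)) t :=
      hd1.sqrt hune
    have hrp : u t ^ ((3:ℝ)/2 - 1) = s := by
      rw [show (3:ℝ)/2 - 1 = 1/2 by norm_num, ← Real.sqrt_eq_rpow]
    have hrpow : HasDerivAt (fun x => u x ^ ((3:ℝ)/2)) (deriv u t * (3/2) * s) t := by
      have := hd1.rpow_const (p := (3:ℝ)/2) (Or.inl hune)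
      rwa [hrp] at this
    have hur : u t ^ ((3:ℝ)/2) = u t * s := by
      rw [show (3:ℝ)/2 = 1 + 1/2 by norm_num, Real.rpow_add hut, Real.rpow_one,
        ← Real.sqrt_eq_rpow]
    -- derivative of P₁
    have hP₁fun : P₁ = fun x => deriv u x + 4 * u x ^ ((3:ℝ)/2) := funext hP₁
    have hdP₁ : HasDerivAt P₁ (deriv (deriv u) t + 6 * s * deriv u t) t := by
      rw [hP₁fun]
      have := hd2.add ((hrpow.const_mul 4))
      convert this using 1; rfl; rfl; rfl; ring
    -- derivative of P₂
    have hP₂fun : P₂ = fun x => deriv (deriv u) x + 10 * Real.sqrt (u x) * deriv u x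
        + 16 * u x ^ 2 := funext hP₂
    have hODE := hode t ht
    rw [← hs] at hODE
    have hval : deriv (deriv (deriv u)) t + (10 * (deriv u t / (2 * s)) * deriv u t
        + 10 * s * deriv (deriv u) t
        + 16 * ((2 : ℕ) * u t ^ (2 - 1) * deriv u t))
        = -4 * s * (deriv (deriv u) t + 10 * s * deriv u t + 16 * u t ^ 2) := by
      field_simp
      linear_combination (2 : ℝ) * hODE + (28 * deriv (deriv u) t + 80 * s * deriv u t
        + 128 * u t ^ 2) * hs2
    have hdP₂ : HasDerivAt P₂ (-4 * s * P₂ t) t := by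
      have h := hd3.add ((((hsqrt.const_mul 10).mul hd2)).add ((hd1.pow 2).const_mul 16))
      convert h using 1
      · rfl
      · rfl
      · funext x
        rw [hP₂ x]
        simp only [Pi.add_apply, Pi.mul_apply, Pi.pow_apply]
        ring
      · rw [hP₂ t, ← hs]
        exact hval.symm
    have hP₂t : P₂ t ≠ 0 := hP₂0 t ht
    have hrel : deriv (deriv u) t + 6 * s * deriv u t + 4 * s * P₁ t = P₂ t := by
      rw [hP₁, hP₂, hur]; linear_combination (16 * u t) * hs2
    constructor
    · have : HasDerivAt I₂ (1 - ((deriv (deriv u) t + 6 * s * deriv u t) * P₂ t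
          - P₁ t * (-4 * s * P₂ t)) / P₂ t ^ 2) t := by
        rw [funext hI₂]
        exact (hasDerivAt_id t).sub (hdP₁.div hdP₂ hP₂t)
      have hnum : (deriv (deriv u) t + 6 * s * deriv u t) * P₂ t
          - P₁ t * (-4 * s * P₂ t) = P₂ t ^ 2 := by linear_combination P₂ t * hrel
      rw [hnum, div_self (pow_ne_zero 2 hP₂t)] at this
      simpa using this
    · have hdiv : HasDerivAt (fun x => P₁ x / P₂ x)
          (((deriv (deriv u) t + 6 * s * deriv u t) * P₂ t
          - P₁ t * (-4 * s * P₂ t)) / P₂ t ^ 2) t := hdP₁.div hdP₂ hP₂t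
      have hdivu : HasDerivAt (fun x => u x / P₂ x)
          ((deriv u t * P₂ t - u t * (-4 * s * P₂ t)) / P₂ t ^ 2) t := hd1.div hdP₂ hP₂t
      have h1 : HasDerivAt (fun x : ℝ => x ^ 2 / 2) t t := by
        have := (hasDerivAt_pow 2 t).div_const 2
        convert this using 1; rfl; rfl; push_cast; ring
      have h2 : HasDerivAt (fun x : ℝ => x * (P₁ x / P₂ x))
          (1 * (P₁ t / P₂ t) + t * (((deriv (deriv u) t + 6 * s * deriv u t) * P₂ t
          - P₁ t * (-4 * s * P₂ t)) / P₂ t ^ 2)) t := (hasDerivAt_id t).mul hdiv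
      have h3 := (h1.sub h2).add hdivu
      rw [funext hI₃]
      convert h3 using 1
      rfl
      rfl
      rfl
      have hnum : (deriv (deriv u) t + 6 * s * deriv u t) * P₂ t
          - P₁ t * (-4 * s * P₂ t) = P₂ t ^ 2 := by linear_combination P₂ t * hrel
      have hq : ((deriv (deriv u) t + 6 * s * deriv u t) * P₂ t
          - P₁ t * (-4 * s * P₂ t)) / P₂ t ^ 2 = 1 := by
        rw [hnum, div_self (pow_ne_zero 2 hP₂t)]
      have hq2 : (deriv u t * P₂ t - u t * (-4 * s * P₂ t)) / P₂ t ^ 2 = P₁ t / P₂ t := by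
        rw [hP₁, hur]; field_simp; ring
      rw [hq, hq2]; ring
  exact ⟨const_of_deriv0 hIopen hIconn (fun t ht => (key t ht).1),
    const_of_deriv0 hIopen hIconn (fun t ht => (key t ht).2)⟩
end

section
/- Let C_1, C_2, C_3 ∈ ℝ and set T(t) = t^2 + 2C_2·t + C_3. Let I be an open interval on which T(t) > 0, t + C_2 + √(T(t)) > 0, and D(t) := (C_3 − C_2^2)·ln(t + C_2 + √(T(t))) + (t + C_2)·√(T(t)) + C_1 > 0. Then the positive function u(t) = T(t)/D(t)^2 satisfies √(u(t))·u'''(t) + 14·u''(t)·u(t) + 5·u'(t)^2 + 72·u'(t)·u(t)·√(u(t)) + 64·u(t)^3 = 0 for all t ∈ I. -/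
/-!
With `g = 4√u`, the chain step `P ↦ P' + g P` is conjugate to differentiation: if `E' = g E`
then `E (P' + g P) = (E P)'`. For `u = T / D²` one has `√u = √T / D` and `D' = 2√T`, so
`E = D²` satisfies `E' = 4√u E`; hence `D² P_j[u] = T⁽ʲ⁾`, and `P₃[u] = 0` because `T` is
quadratic. The displayed equation is `√u P₃[u]` expanded with `(√u)' = u' / (2√u)`.
-/

open Set Filter Real

/-- `P_{j+1} = chainStep g P_j` is the chain generated by `g`. -/
noncomputable def chainStep (g P : ℝ → ℝ) : ℝ → ℝ := fun t => deriv P t + g t * P t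

section chainStep

variable {g f f₁ f₂ f' : ℝ → ℝ} {I : Set ℝ}

lemma chainStep_congr (hI : IsOpen I) (h : EqOn f₁ f₂ I) :
    EqOn (chainStep g f₁) (chainStep g f₂) I := fun t ht => by
  simp only [chainStep, (h.eventuallyEq_of_mem (hI.mem_nhds ht)).deriv_eq, h ht]

lemma chainStep_eqOn_of_hasDerivAt (hf : ∀ t ∈ I, HasDerivAt f (f' t) t) :
    EqOn (chainStep g f) (fun t => f' t + g t * f t) I := fun t ht => by
  simp only [chainStep, (hf t ht).deriv]

lemma chainStep_eqOn_div {E h h' : ℝ → ℝ} (hI : IsOpen I)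
    (hE : ∀ t ∈ I, HasDerivAt E (g t * E t) t) (hE0 : ∀ t ∈ I, E t ≠ 0)
    (hh : ∀ t ∈ I, HasDerivAt h (h' t) t) (hf : EqOn f (fun t => h t / E t) I) :
    EqOn (chainStep g f) (fun t => h' t / E t) I := by
  intro t ht
  rw [chainStep_congr (f₂ := fun s => h s / E s) hI hf ht,
    chainStep_eqOn_of_hasDerivAt (f := fun s => h s / E s)
      (f' := fun s => (h' s * E s - h s * (g s * E s)) / E s ^ 2)
      (fun s hs => (hh s hs).div (hE s hs) (hE0 s hs)) ht]
  field_simp [hE0 t ht]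
  ring

end chainStep

section fourSqrt

variable {u : ℝ → ℝ} {I : Set ℝ}

lemma ContDiffOn.hasDerivAt_deriv {n : WithTop ℕ∞} {f : ℝ → ℝ} (hf : ContDiffOn ℝ n f I)
    (hI : IsOpen I) (hn : n ≠ 0) {t : ℝ} (ht : t ∈ I) : HasDerivAt f (deriv f t) t :=
  ((hf.differentiableOn hn t ht).differentiableAt (hI.mem_nhds ht)).hasDerivAt

lemma chainStep_four_sqrt_twice_eqOn (hI : IsOpen I) (hu : ContDiffOn ℝ 2 u I)
    (hpos : ∀ t ∈ I, 0 < u t) :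
    EqOn (chainStep (fun t => 4 * √(u t)) (chainStep (fun t => 4 * √(u t)) u))
      (fun t => deriv (deriv u) t + 10 * √(u t) * deriv u t + 16 * u t ^ 2) I := by
  have hu1 : ContDiffOn ℝ 1 (deriv u) I := hu.deriv_of_isOpen hI (by norm_num)
  have hP1 : EqOn (chainStep (fun t => 4 * √(u t)) u)
      (fun t => deriv u t + 4 * √(u t) * u t) I :=
    chainStep_eqOn_of_hasDerivAt fun t ht => hu.hasDerivAt_deriv hI (by norm_num) ht
  intro t ht
  have hv := (hu.hasDerivAt_deriv hI (by norm_num) ht).sqrt (hpos t ht).ne'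
  have hQ1 : HasDerivAt (fun t => deriv u t + 4 * √(u t) * u t)
      (deriv (deriv u) t + (4 * (deriv u t / (2 * √(u t))) * u t + 4 * √(u t) * deriv u t)) t :=
    (hu1.hasDerivAt_deriv hI (by norm_num) ht).add
      ((hv.const_mul 4).mul (hu.hasDerivAt_deriv hI (by norm_num) ht))
  rw [chainStep_congr hI hP1 ht, chainStep, hQ1.deriv]
  have hsq : √(u t) ^ 2 = u t := sq_sqrt (hpos t ht).le
  have hv0 : √(u t) ≠ 0 := (sqrt_pos.mpr (hpos t ht)).ne'
  field_simp
  linear_combination (32 * √(u t) * u t - 4 * deriv u t) * hsq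

lemma sqrt_mul_chainStep_four_sqrt_thrice (hI : IsOpen I) (hu : ContDiffOn ℝ 3 u I)
    (hpos : ∀ t ∈ I, 0 < u t) {t : ℝ} (ht : t ∈ I) :
    √(u t) * chainStep (fun t => 4 * √(u t))
        (chainStep (fun t => 4 * √(u t)) (chainStep (fun t => 4 * √(u t)) u)) t =
      √(u t) * deriv (deriv (deriv u)) t + 14 * deriv (deriv u) t * u t + 5 * deriv u t ^ 2 +
        72 * deriv u t * u t * √(u t) + 64 * u t ^ 3 := by
  have hu1 : ContDiffOn ℝ 2 (deriv u) I := hu.deriv_of_isOpen hI (by norm_num)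
  have hu2 : ContDiffOn ℝ 1 (deriv (deriv u)) I := hu1.deriv_of_isOpen hI (by norm_num)
  have hd := hu.hasDerivAt_deriv hI (by norm_num) ht
  have hv := hd.sqrt (hpos t ht).ne'
  have hQ2 : HasDerivAt (fun t => deriv (deriv u) t + 10 * √(u t) * deriv u t + 16 * u t ^ 2)
      (deriv (deriv (deriv u)) t +
        (10 * (deriv u t / (2 * √(u t))) * deriv u t + 10 * √(u t) * deriv (deriv u) t) +
        16 * (2 * u t * deriv u t)) t := by
    refine ((hu2.hasDerivAt_deriv hI (by norm_num) ht).add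
      ((hv.const_mul 10).mul (hu1.hasDerivAt_deriv hI (by norm_num) ht))).add
      ((hd.pow 2).const_mul 16) |>.congr_deriv ?_
    ring
  rw [chainStep_congr hI (chainStep_four_sqrt_twice_eqOn hI (hu.of_le (by norm_num)) hpos) ht,
    chainStep, hQ2.deriv]
  have hsq : √(u t) ^ 2 = u t := sq_sqrt (hpos t ht).le
  have hv0 : √(u t) ≠ 0 := (sqrt_pos.mpr (hpos t ht)).ne'
  field_simp
  linear_combination (28 * deriv (deriv u) t + 128 * u t ^ 2 + 80 * √(u t) * deriv u t) * hsq

end fourSqrt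

section logAddSqrt

variable {T : ℝ → ℝ} {a b : ℝ}

lemma hasDerivAt_log_add_sqrt {x : ℝ} (hT : HasDerivAt T (2 * (x + b)) x)
    (hTx : T x = (x + b) ^ 2 + a) (hpos : 0 < T x) (harg : 0 < x + b + √(T x)) :
    HasDerivAt (fun t => a * log (t + b + √(T t)) + (t + b) * √(T t)) (2 * √(T x)) x := by
  have hS : HasDerivAt (fun t => √(T t)) (2 * (x + b) / (2 * √(T x))) x := hT.sqrt hpos.ne'
  have hlin : HasDerivAt (fun t => t + b) 1 x := (hasDerivAt_id x).add_const b
  have hSpos : 0 < √(T x) := sqrt_pos.mpr hpos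
  have hsq : √(T x) ^ 2 = (x + b) ^ 2 + a := by rw [sq_sqrt hpos.le, hTx]
  have hsum : HasDerivAt (fun t => t + b + √(T t)) (1 + 2 * (x + b) / (2 * √(T x))) x :=
    hlin.add hS
  refine (((hsum.log harg.ne').const_mul a).add (hlin.mul hS)).congr_deriv ?_
  field_simp
  linear_combination -(x + b + √(T x)) * hsq

lemma contDiffOn_log_add_sqrt {n : WithTop ℕ∞} {I : Set ℝ} (hT : ContDiff ℝ n T)
    (hpos : ∀ t ∈ I, T t ≠ 0) (harg : ∀ t ∈ I, t + b + √(T t) ≠ 0) :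
    ContDiffOn ℝ n (fun t => a * log (t + b + √(T t)) + (t + b) * √(T t)) I := by
  have hS : ContDiffOn ℝ n (fun t => √(T t)) I := hT.contDiffOn.sqrt hpos
  fun_prop (disch := exact harg)

end logAddSqrt

lemma hasDerivAt_sq_of_hasDerivAt_two_sqrt {D T : ℝ → ℝ} {x : ℝ}
    (hD : HasDerivAt D (2 * √(T x)) x) (hT : 0 ≤ T x) (hDpos : 0 < D x) :
    HasDerivAt (fun t => D t ^ 2) (4 * √(T x / D x ^ 2) * D x ^ 2) x := by
  refine (hD.pow 2).congr_deriv ?_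
  rw [sqrt_div hT, sqrt_sq hDpos.le]
  field_simp
  ring

theorem explicit_solution_of_third_order_example_general
    (C₁ C₂ C₃ : ℝ)
    (T : ℝ → ℝ) (hT : ∀ t, T t = t ^ 2 + 2 * C₂ * t + C₃)
    (I : Set ℝ) (hIopen : IsOpen I)
    (hTpos : ∀ t ∈ I, 0 < T t)
    (hargpos : ∀ t ∈ I, 0 < t + C₂ + Real.sqrt (T t))
    (D : ℝ → ℝ)
    (hD : ∀ t, D t = (C₃ - C₂ ^ 2) * Real.log (t + C₂ + Real.sqrt (T t)) +
      (t + C₂) * Real.sqrt (T t) + C₁)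
    (hDpos : ∀ t ∈ I, 0 < D t)
    (u : ℝ → ℝ) (hu : ∀ t, u t = T t / D t ^ 2) :
    ∀ t ∈ I, Real.sqrt (u t) * deriv (deriv (deriv u)) t +
      14 * deriv (deriv u) t * u t + 5 * deriv u t ^ 2 +
      72 * deriv u t * u t * Real.sqrt (u t) + 64 * u t ^ 3 = 0 := by
  have hT_eq : T = fun t => t ^ 2 + 2 * C₂ * t + C₃ := funext hT
  have hD_eq : D = _ := funext hD
  have hTd : ∀ t, HasDerivAt T (2 * (t + C₂)) t := fun t => by
    rw [hT_eq]
    exact ((hasDerivAt_pow 2 t).add ((hasDerivAt_id t).const_mul (2 * C₂))).add_const C₃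
      |>.congr_deriv (by simp only [Nat.cast_ofNat]; ring)
  have hDd : ∀ t ∈ I, HasDerivAt D (2 * √(T t)) t := fun t ht => by
    rw [hD_eq]
    exact (hasDerivAt_log_add_sqrt (hTd t) (by rw [hT]; ring) (hTpos t ht)
      (hargpos t ht)).add_const C₁
  have hE : ∀ t ∈ I, HasDerivAt (fun t => D t ^ 2) (4 * √(u t) * D t ^ 2) t := fun t ht => by
    rw [hu]; exact hasDerivAt_sq_of_hasDerivAt_two_sqrt (hDd t ht) (hTpos t ht).le (hDpos t ht)
  have hE0 : ∀ t ∈ I, D t ^ 2 ≠ 0 := fun t ht => pow_ne_zero 2 (hDpos t ht).ne'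
  have hP1 := chainStep_eqOn_div hIopen hE hE0 (fun t _ => hTd t) (fun t _ => hu t)
  have hP2 := chainStep_eqOn_div hIopen hE hE0 (h' := fun _ => 2)
    (fun t _ => by simpa using ((hasDerivAt_id t).add_const C₂).const_mul 2) hP1
  have hP3 := chainStep_eqOn_div hIopen hE hE0 (fun t _ => hasDerivAt_const t 2) hP2
  have hT_smooth : ContDiff ℝ 3 T := by rw [hT_eq]; fun_prop
  have hD_smooth : ContDiffOn ℝ 3 D I := by
    rw [hD_eq]
    exact (contDiffOn_log_add_sqrt hT_smooth (fun t ht => (hTpos t ht).ne')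
      (fun t ht => (hargpos t ht).ne')).add contDiffOn_const
  have hu_smooth : ContDiffOn ℝ 3 u I :=
    (hT_smooth.contDiffOn.div (hD_smooth.pow 2) hE0).congr fun t _ => hu t
  have hu_pos : ∀ t ∈ I, 0 < u t := fun t ht => by
    rw [hu]; exact div_pos (hTpos t ht) (pow_pos (hDpos t ht) 2)
  intro t ht
  rw [← sqrt_mul_chainStep_four_sqrt_thrice hIopen hu_smooth hu_pos ht, hP3 ht]
  simp

theorem explicit_solution_of_third_order_example
    (C₁ C₂ C₃ : ℝ)
    (T : ℝ → ℝ) (hT : ∀ t, T t = t ^ 2 + 2 * C₂ * t + C₃)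
    (I : Set ℝ) (hIopen : IsOpen I) (hIconn : I.OrdConnected)
    (hTpos : ∀ t ∈ I, 0 < T t)
    (hargpos : ∀ t ∈ I, 0 < t + C₂ + Real.sqrt (T t))
    (D : ℝ → ℝ)
    (hD : ∀ t, D t = (C₃ - C₂ ^ 2) * Real.log (t + C₂ + Real.sqrt (T t)) +
      (t + C₂) * Real.sqrt (T t) + C₁)
    (hDpos : ∀ t ∈ I, 0 < D t)
    (u : ℝ → ℝ) (hu : ∀ t, u t = T t / D t ^ 2) :
    ∀ t ∈ I, Real.sqrt (u t) * deriv (deriv (deriv u)) t +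
      14 * deriv (deriv u) t * u t + 5 * deriv u t ^ 2 +
      72 * deriv u t * u t * Real.sqrt (u t) + 64 * u t ^ 3 = 0 :=
  explicit_solution_of_third_order_example_general C₁ C₂ C₃ T hT I hIopen hTpos hargpos D hD hDpos u
    hu
end
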